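/- arXiv:1703.04507 — 6 statements merged into one kernel-verified Lean document; each statement's English description precedes it below -/
import Mathlib

section
/- Let Ξ ⊆ ℝⁿ be a nonempty closed convex set, let 𝒜 ⊆ Ξ be a nonempty compact convex set, let α > 0, let y ∈ Ξ and s ∈ ℝⁿ, and set y⁺ = P_Ξ(y − α s). Then (1/2)·dist(y⁺, 𝒜)² − (1/2)·dist(y, 𝒜)² ≤ −α ⟨y − P_𝒜(y), s⟩ + (1/2) α² ‖s‖². -/
open Metric RealInnerProductSpace

/-- Let Ξ ⊆ ℝⁿ be a nonempty closed convex set, 𝒜 ⊆ Ξ a nonempty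
compact convex set, α > 0, y ∈ Ξ, s ∈ ℝⁿ, and let y⁺ = P_Ξ(y − α s) (the metric
projection of y − α s onto Ξ) and p = P_𝒜(y) (the metric projection of y onto 𝒜).
Then (1/2)·dist(y⁺,𝒜)² − (1/2)·dist(y,𝒜)² ≤ −α ⟨y − p, s⟩ + (1/2) α² ‖s‖². -/
theorem stmt0 {n : ℕ} (Xi A : Set (EuclideanSpace ℝ (Fin n)))
    (hXine : Xi.Nonempty) (hXicl : IsClosed Xi) (hXicv : Convex ℝ Xi)
    (hAne : A.Nonempty) (hAcp : IsCompact A) (hAcv : Convex ℝ A) (hAXi : A ⊆ Xi)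
    (α : ℝ) (hα : 0 < α) (y s yplus p : EuclideanSpace ℝ (Fin n)) (hy : y ∈ Xi)
    (hyplus_mem : yplus ∈ Xi)
    (hyplus_proj : ∀ z ∈ Xi, ‖(y - α • s) - yplus‖ ≤ ‖(y - α • s) - z‖)
    (hp_mem : p ∈ A) (hp_proj : ‖y - p‖ = Metric.infDist y A) :
    (1/2) * (Metric.infDist yplus A)^2 - (1/2) * (Metric.infDist y A)^2 ≤
      -α * ⟪y - p, s⟫ + (1/2) * α^2 * ‖s‖^2 := by
  set x := y - α • s with hx
  haveI : Nonempty Xi := ⟨⟨y, hy⟩⟩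
  have hinf : ‖x - yplus‖ = ⨅ w : Xi, ‖x - w‖ := by
    apply le_antisymm
    · exact le_ciInf fun w => hyplus_proj w w.2
    · exact ciInf_le ⟨0, fun r ⟨w, hw⟩ => hw ▸ norm_nonneg _⟩ (⟨yplus, hyplus_mem⟩ : Xi)
  have hobtuse : ⟪x - yplus, p - yplus⟫ ≤ 0 :=
    (norm_eq_iInf_iff_real_inner_le_zero hXicv hyplus_mem).1 hinf p (hAXi hp_mem)
  have h2 : ‖p - x‖ ^ 2 = ‖p - yplus‖ ^ 2 - 2 * ⟪p - yplus, x - yplus⟫ + ‖x - yplus‖ ^ 2 := by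
    have h : p - x = (p - yplus) - (x - yplus) := by abel
    rw [h, @norm_sub_sq_real]
  have hkey : ‖p - yplus‖ ^ 2 ≤ ‖p - x‖ ^ 2 := by
    rw [h2, real_inner_comm]
    nlinarith [sq_nonneg ‖x - yplus‖, hobtuse]
  have hle : Metric.infDist yplus A ≤ ‖p - yplus‖ := by
    rw [norm_sub_rev, ← dist_eq_norm]
    exact Metric.infDist_le_dist_of_mem hp_mem
  have hsq : (Metric.infDist yplus A) ^ 2 ≤ ‖p - x‖ ^ 2 := by
    have h0 : (0:ℝ) ≤ Metric.infDist yplus A := Metric.infDist_nonneg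
    nlinarith [norm_nonneg (p - yplus)]
  have hexp : ‖p - x‖ ^ 2 = ‖y - p‖ ^ 2 - 2 * α * ⟪y - p, s⟫ + α ^ 2 * ‖s‖ ^ 2 := by
    have h : p - x = -((y - p) - α • s) := by rw [hx]; abel
    rw [h, norm_neg, @norm_sub_sq_real, real_inner_smul_right, norm_smul, Real.norm_eq_abs,
      abs_of_pos hα]
    ring
  rw [← hp_proj]
  nlinarith [hsq, hexp]
end

section
/- Consider the iterative method y⁺ = P_Ξ(y − α s), s ∈ Ψ(y), where Ξ ⊆ ℝⁿ is nonempty, closed and convex, 𝒜 ⊆ Ξ is nonempty and compact, V : ℝⁿ → ℝ is differentiable, nonnegative, positive definite and radially unbounded with respect to 𝒜, and Ψ : ℝⁿ → Set ℝⁿ is SPSP with respect to V on Ξ. Assume there exists w > 0 such that for every α > 0, every y ∈ Ξ and every s ∈ Ψ(y), V(P_Ξ(y − α s)) − V(y) ≤ −α ⟨∇V(y), s⟩ + α² w ‖s‖². Assume further there exists β > 0 such that ‖s‖² ≤ β ⟨∇V(y), s⟩ for all y ∈ Ξ and all s ∈ Ψ(y). Then 𝒜 is semiglobally, practically, asymptotically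 stable (SPAS) for the method with the gain α as parameter. -/
open Metric RealInnerProductSpace

/-- `Ψ` is semiglobally, practically, strictly pseudogradient (SPSP) with respect to `V`
(whose gradient is `gradient V`) on `Xi`, relative to the compact set `A`: there are
`ε ≥ 0` and `b ≥ 0` with `⟨∇V(y), s⟩ ≥ −b` for `y ∈ Xi` with `dist(y,A) ≤ ε`, and for
every `σ > ε` a continuous function `φ`, positive on `Xi ∩ (B̄_σ(A) \ B_ε(A))` and
radially unbounded with respect to `A`, with `⟨∇V(y), s⟩ ≥ φ(y)` on that band. -/
def IsSPSP {n : ℕ} (A Xi : Set (EuclideanSpace ℝ (Fin n)))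
    (V : EuclideanSpace ℝ (Fin n) → ℝ)
    (Ψ : EuclideanSpace ℝ (Fin n) → Set (EuclideanSpace ℝ (Fin n))) : Prop :=
  ∃ ε ≥ (0:ℝ), ∃ b ≥ (0:ℝ),
    (∀ y ∈ Xi, Metric.infDist y A ≤ ε → ∀ s ∈ Ψ y, -b ≤ ⟪gradient V y, s⟫) ∧
    ∀ σ > ε, ∃ φ : EuclideanSpace ℝ (Fin n) → ℝ, Continuous φ ∧
      (∀ y ∈ Xi, ε ≤ Metric.infDist y A → Metric.infDist y A ≤ σ → 0 < φ y) ∧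
      (∀ B : ℝ, ∃ r > (0:ℝ), ∀ y, r < Metric.infDist y A → B < φ y) ∧
      (∀ y ∈ Xi, ε ≤ Metric.infDist y A → Metric.infDist y A ≤ σ →
        ∀ s ∈ Ψ y, φ y ≤ ⟪gradient V y, s⟫)

/-- The compact set `A ⊆ Xi` is semiglobally, practically, asymptotically stable (SPAS)
for an iterative method whose solutions with gain `α` are described by the predicate
`Sol α`: practical stability together with semiglobal practical attractivity. -/
def IsSPAS {n : ℕ} (A Xi : Set (EuclideanSpace ℝ (Fin n)))
    (Sol : ℝ → (ℕ → EuclideanSpace ℝ (Fin n)) → Prop) : Prop :=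
  (∃ ρ' > (0:ℝ), ∀ ρ > ρ', ∃ δ > (0:ℝ), ∃ αbar > (0:ℝ), ∀ α : ℝ, 0 < α → α ≤ αbar →
      ∀ ξ : ℕ → EuclideanSpace ℝ (Fin n), Sol α ξ → Metric.infDist (ξ 0) A ≤ δ →
        ∀ t : ℕ, Metric.infDist (ξ t) A ≤ ρ) ∧
  (∃ ρa' > (0:ℝ), ∀ σ ρa : ℝ, ρa' < ρa → ρa < σ →
      ∃ αbar > (0:ℝ), ∀ α : ℝ, 0 < α → α ≤ αbar → ∀ ε > (0:ℝ),
        ({y ∈ Xi | Metric.infDist y {z | Metric.infDist z A ≤ ρa} ≤ ε} ⊆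
          {y ∈ Xi | Metric.infDist y A ≤ σ}) →
        ∃ T : ℕ, ∀ ξ : ℕ → EuclideanSpace ℝ (Fin n), Sol α ξ →
          Metric.infDist (ξ 0) A ≤ σ →
          ∀ t ≥ T, Metric.infDist (ξ t) {z | Metric.infDist z A ≤ ρa} ≤ ε)

lemma aux_cpt {n : ℕ} {A : Set (EuclideanSpace ℝ (Fin n))} (hAne : A.Nonempty)
    (hAcp : IsCompact A) (r : ℝ) : IsCompact {y | Metric.infDist y A ≤ r} := by
  obtain ⟨a, ha⟩ := hAne
  refine Metric.isCompact_of_isClosed_isBounded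
    (isClosed_le (continuous_infDist_pt A) continuous_const) ?_
  apply (Metric.isBounded_closedBall (x := a) (r := r + Metric.diam A)).subset
  intro y hy
  have h1 := Metric.dist_le_infDist_add_diam (x := y) hAcp.isBounded ha
  simp only [Metric.mem_closedBall]
  have h2 : Metric.infDist y A ≤ r := hy
  linarith

lemma aux_threshold {n : ℕ} {A : Set (EuclideanSpace ℝ (Fin n))} (hAne : A.Nonempty)
    (hAcp : IsCompact A) {V : EuclideanSpace ℝ (Fin n) → ℝ} (hVc : Continuous V)
    (hVru : ∀ B : ℝ, ∃ r > (0:ℝ), ∀ y, r < Metric.infDist y A → B < V y)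
    {M ρ₀ ρ : ℝ} (hρ : ρ₀ < ρ)
    (h : ∀ y, ρ₀ < Metric.infDist y A → M < V y) :
    ∃ μ > M, ∀ y, V y < μ → Metric.infDist y A ≤ ρ := by
  obtain ⟨r₂, hr₂pos, hr₂⟩ := hVru (M + 1)
  set K : Set (EuclideanSpace ℝ (Fin n)) :=
    {y | ρ ≤ Metric.infDist y A ∧ Metric.infDist y A ≤ r₂} with hK
  have hKcl : IsClosed K :=
    (isClosed_le continuous_const (continuous_infDist_pt A)).inter
      (isClosed_le (continuous_infDist_pt A) continuous_const)
  have hKcp : IsCompact K := (aux_cpt hAne hAcp r₂).of_isClosed_subset hKcl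
    (fun y hy => hy.2)
  by_cases hKne : K.Nonempty
  · obtain ⟨z, hzK, hz⟩ := hKcp.exists_isMinOn hKne hVc.continuousOn
    have hzM : M < V z := h z (lt_of_lt_of_le hρ hzK.1)
    refine ⟨min (V z) (M+1), by simp [lt_min_iff, hzM], ?_⟩
    intro y hy
    by_contra hcon
    push_neg at hcon
    rcases le_or_gt (Metric.infDist y A) r₂ with h1 | h1
    · have hyK : y ∈ K := ⟨hcon.le, h1⟩
      have h2 : min (V z) (M+1) ≤ V y := le_trans (min_le_left _ _) (hz hyK)
      linarith
    · have h2 : min (V z) (M+1) ≤ V y := le_trans (min_le_right _ _) (hr₂ y h1).le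
      linarith
  · refine ⟨M+1, by linarith, ?_⟩
    intro y hy
    by_contra hcon
    push_neg at hcon
    rcases le_or_gt (Metric.infDist y A) r₂ with h1 | h1
    · exact hKne ⟨y, hcon.le, h1⟩
    · linarith [hr₂ y h1]

/-- For the iterative method `y⁺ = P_Ξ(y − α s)`, `s ∈ Ψ(y)`, with `Ξ`
nonempty closed convex, `A ⊆ Ξ` nonempty compact, `V` differentiable, nonnegative,
positive definite and radially unbounded with respect to `A`, `Ψ` SPSP with respect to
`V` on `Ξ`, a descent inequality with constant `w > 0`, and the relative growth
condition `‖s‖² ≤ β ⟨∇V(y), s⟩`: the set `A` is SPAS with the gain `α` as parameter. -/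
theorem stmt2 {n : ℕ} (Xi A : Set (EuclideanSpace ℝ (Fin n)))
    (hXine : Xi.Nonempty) (hXicl : IsClosed Xi) (hXicv : Convex ℝ Xi)
    (hAne : A.Nonempty) (hAcp : IsCompact A) (hAXi : A ⊆ Xi)
    (V : EuclideanSpace ℝ (Fin n) → ℝ) (hVdiff : Differentiable ℝ V)
    (hVnn : ∀ y, 0 ≤ V y) (hVzero : ∀ y ∈ A, V y = 0) (hVpos : ∀ y ∉ A, 0 < V y)
    (hVru : ∀ B : ℝ, ∃ r > (0:ℝ), ∀ y, r < Metric.infDist y A → B < V y)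
    (Ψ : EuclideanSpace ℝ (Fin n) → Set (EuclideanSpace ℝ (Fin n)))
    (hSPSP : IsSPSP A Xi V Ψ)
    (P : EuclideanSpace ℝ (Fin n) → EuclideanSpace ℝ (Fin n))
    (hP : ∀ x, P x ∈ Xi ∧ ∀ z ∈ Xi, ‖x - P x‖ ≤ ‖x - z‖)
    (w : ℝ) (hw : 0 < w)
    (hdesc : ∀ α : ℝ, 0 < α → ∀ y ∈ Xi, ∀ s ∈ Ψ y,
      V (P (y - α • s)) - V y ≤ -α * ⟪gradient V y, s⟫ + α^2 * w * ‖s‖^2)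
    (β : ℝ) (hβ : 0 < β)
    (hgrow : ∀ y ∈ Xi, ∀ s ∈ Ψ y, ‖s‖^2 ≤ β * ⟪gradient V y, s⟫) :
    IsSPAS A Xi (fun α ξ =>
      ξ 0 ∈ Xi ∧ ∀ t : ℕ, ∃ s ∈ Ψ (ξ t), ξ (t+1) = P (ξ t - α • s)) := by
  have hVc : Continuous V := hVdiff.continuous
  obtain ⟨ε, hε0, b, hb0, hnear, hband⟩ := hSPSP
  obtain ⟨a, ha⟩ := hAne
  set αb : ℝ := 1/(2*w*β) with hαb
  have hαbpos : 0 < αb := by positivity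
  -- one-step estimate
  have hstep : ∀ α : ℝ, 0 < α → α ≤ αb → ∀ y ∈ Xi, ∀ s ∈ Ψ y,
      0 ≤ ⟪gradient V y, s⟫ ∧ V (P (y - α • s)) ≤ V y - (α/2) * ⟪gradient V y, s⟫ := by
    intro α hα hαle y hy s hs
    have hg := hgrow y hy s hs
    have hsn : (0:ℝ) ≤ ‖s‖^2 := sq_nonneg _
    have hgpos : 0 ≤ ⟪gradient V y, s⟫ := by nlinarith
    refine ⟨hgpos, ?_⟩
    have hd := hdesc α hα y hy s hs
    have hwβ : α * (w*β) ≤ 1/2 := by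
      rw [hαb, le_div_iff₀ (by positivity)] at hαle
      nlinarith
    have h1 : α^2 * w * ‖s‖^2 ≤ α^2 * w * (β * ⟪gradient V y, s⟫) :=
      mul_le_mul_of_nonneg_left hg (by positivity)
    have h2 : (α * (w*β)) * ⟪gradient V y, s⟫ ≤ (1/2) * ⟪gradient V y, s⟫ :=
      mul_le_mul_of_nonneg_right hwβ hgpos
    nlinarith [mul_le_mul_of_nonneg_left h2 hα.le]
  -- trajectory facts
  have htraj : ∀ α : ℝ, 0 < α → α ≤ αb → ∀ ξ : ℕ → EuclideanSpace ℝ (Fin n),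
      (ξ 0 ∈ Xi ∧ ∀ t : ℕ, ∃ s ∈ Ψ (ξ t), ξ (t+1) = P (ξ t - α • s)) →
      (∀ t, ξ t ∈ Xi) ∧ (∀ t, V (ξ (t+1)) ≤ V (ξ t)) := by
    intro α hα hαle ξ hsol
    obtain ⟨h0, hs⟩ := hsol
    have hXi : ∀ t, ξ t ∈ Xi := by
      intro t
      induction t with
      | zero => exact h0
      | succ k ih =>
        obtain ⟨s, _, heq⟩ := hs k
        rw [heq]; exact (hP _).1
    refine ⟨hXi, fun t => ?_⟩
    obtain ⟨s, hsmem, heq⟩ := hs t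
    obtain ⟨hg0, hle⟩ := hstep α hα hαle (ξ t) (hXi t) s hsmem
    rw [heq]
    nlinarith
  constructor
  · -- practical stability
    refine ⟨1, one_pos, ?_⟩
    intro ρ hρ1
    have hρ0 : (0:ℝ) < ρ := lt_trans one_pos hρ1
    obtain ⟨m, hm0, hm⟩ := aux_threshold ⟨a, ha⟩ hAcp hVc hVru (M := 0) (ρ₀ := 0) hρ0
      (fun y hy => hVpos y (fun hmem => by
        rw [Metric.infDist_zero_of_mem hmem] at hy; exact lt_irrefl 0 hy))
    -- find δ
    have hδex : ∃ δ > (0:ℝ), ∀ y, Metric.infDist y A ≤ δ → V y < m := by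
      set W : Set (EuclideanSpace ℝ (Fin n)) :=
        {y | Metric.infDist y A ≤ 1} ∩ {y | m ≤ V y} with hW
      have hWcp : IsCompact W := (aux_cpt ⟨a, ha⟩ hAcp 1).of_isClosed_subset
        ((isClosed_le (continuous_infDist_pt A) continuous_const).inter
          (isClosed_le continuous_const hVc)) (fun y hy => hy.1)
      by_cases hWne : W.Nonempty
      · obtain ⟨z, hzW, hz⟩ := hWcp.exists_isMinOn hWne
          (continuous_infDist_pt A).continuousOn
        have hznA : z ∉ A := fun hmem => by
          have := hVzero z hmem
          have := hzW.2
          simp only [Set.mem_setOf_eq] at this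
          linarith
        have hzpos : 0 < Metric.infDist z A := by
          rcases lt_or_eq_of_le (Metric.infDist_nonneg (x := z) (s := A)) with h | h
          · exact h
          · exfalso
            have hzc : z ∈ closure A :=
              (Metric.mem_closure_iff_infDist_zero ⟨a, ha⟩).mpr h.symm
            rw [hAcp.isClosed.closure_eq] at hzc
            exact hznA hzc
        refine ⟨Metric.infDist z A / 2, by linarith, ?_⟩
        intro y hy
        by_contra hcon
        push_neg at hcon
        have hy1 : Metric.infDist y A ≤ 1 := by
          have : Metric.infDist z A ≤ 1 := hzW.1
          linarith
        have hyW : y ∈ W := ⟨hy1, hcon⟩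
        have := hz hyW
        simp only [Set.mem_setOf_eq] at this
        linarith
      · refine ⟨1, one_pos, ?_⟩
        intro y hy
        by_contra hcon
        push_neg at hcon
        exact hWne ⟨y, hy, hcon⟩
    obtain ⟨δ, hδ0, hδ⟩ := hδex
    refine ⟨δ, hδ0, αb, hαbpos, ?_⟩
    intro α hα hαle ξ hsol hinit t
    obtain ⟨hXit, hmono⟩ := htraj α hα hαle ξ hsol
    have hV0 : V (ξ 0) < m := hδ _ hinit
    have hVt : V (ξ t) ≤ V (ξ 0) := antitone_nat_of_succ_le (f := fun t => V (ξ t)) hmono (Nat.zero_le t)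
    exact hm _ (lt_of_le_of_lt hVt hV0)
  · -- semiglobal practical attractivity
    -- max of V on the ε-neighborhood of A
    have hKεcp : IsCompact {y | Metric.infDist y A ≤ ε} := aux_cpt ⟨a, ha⟩ hAcp ε
    have hKεne : Set.Nonempty {y | Metric.infDist y A ≤ ε} :=
      ⟨a, by simp [Metric.infDist_zero_of_mem ha, hε0]⟩
    obtain ⟨zε, hzε, hzεmax⟩ := hKεcp.exists_isMaxOn hKεne hVc.continuousOn
    obtain ⟨r₀, hr₀pos, hr₀⟩ := hVru (V zε)
    refine ⟨max r₀ (max ε 1), lt_of_lt_of_le one_pos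
      (le_trans (le_max_right ε 1) (le_max_right r₀ (max ε 1))), ?_⟩
    intro σ ρa hρa hσ
    have hr₀ρa : r₀ < ρa := lt_of_le_of_lt (le_max_left _ _) hρa
    have hερa : ε < ρa := lt_of_le_of_lt (le_trans (le_max_left ε 1)
      (le_max_right r₀ (max ε 1))) hρa
    have h1ρa : (1:ℝ) < ρa := lt_of_le_of_lt (le_trans (le_max_right ε 1)
      (le_max_right r₀ (max ε 1))) hρa
    have hσ0 : (0:ℝ) < σ := by linarith
    -- threshold μ : V y < μ → infDist y A ≤ ρa, and μ > V zε
    obtain ⟨μ, hμM, hμ⟩ := aux_threshold ⟨a, ha⟩ hAcp hVc hVru (M := V zε)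
      (ρ₀ := r₀) hr₀ρa hr₀
    have hμ0 : 0 < μ := lt_of_le_of_lt (hVnn zε) hμM
    -- max of V on the σ-neighborhood of A
    have hKσcp : IsCompact {y | Metric.infDist y A ≤ σ} := aux_cpt ⟨a, ha⟩ hAcp σ
    obtain ⟨zσ, hzσ, hzσmax⟩ := hKσcp.exists_isMaxOn
      ⟨a, by simp only [Set.mem_setOf_eq, Metric.infDist_zero_of_mem ha]; linarith⟩
      hVc.continuousOn
    set Mσ := V zσ with hMσ
    -- confinement radius
    obtain ⟨rσ, hrσpos, hrσ⟩ := hVru Mσ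
    set σh : ℝ := max rσ (ε+1) with hσh
    have hεσh : ε < σh := lt_of_lt_of_le (by linarith) (le_max_right rσ (ε+1))
    -- the band and the lower bound c for φ
    obtain ⟨φ, hφc, hφpos, _, hφle⟩ := hband σh hεσh
    set Kb : Set (EuclideanSpace ℝ (Fin n)) :=
      Xi ∩ ({y | ε ≤ Metric.infDist y A} ∩ {y | Metric.infDist y A ≤ σh}) with hKb
    have hKbcp : IsCompact Kb := (aux_cpt ⟨a, ha⟩ hAcp σh).of_isClosed_subset
      (hXicl.inter ((isClosed_le continuous_const (continuous_infDist_pt A)).inter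
        (isClosed_le (continuous_infDist_pt A) continuous_const)))
      (fun y hy => hy.2.2)
    have hcex : ∃ c > (0:ℝ), ∀ y ∈ Kb, c ≤ φ y := by
      by_cases hKbne : Kb.Nonempty
      · obtain ⟨zb, hzb, hzbmin⟩ := hKbcp.exists_isMinOn hKbne hφc.continuousOn
        exact ⟨φ zb, hφpos zb hzb.1 hzb.2.1 hzb.2.2, fun y hy => hzbmin hy⟩
      · exact ⟨1, one_pos, fun y hy => absurd ⟨y, hy⟩ hKbne⟩
    obtain ⟨c, hc0, hc⟩ := hcex
    refine ⟨αb, hαbpos, ?_⟩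
    intro α hα hαle ε' hε' hincl
    set d : ℝ := α * c / 2 with hd
    have hd0 : 0 < d := by positivity
    obtain ⟨T, hT⟩ := exists_nat_gt (Mσ / d)
    have hTd : Mσ < T * d := by
      rw [div_lt_iff₀ hd0] at hT
      exact hT
    refine ⟨T, ?_⟩
    intro ξ hsol hinit t ht
    obtain ⟨hXit, hmono⟩ := htraj α hα hαle ξ hsol
    have hanti : ∀ t₁ t₂ : ℕ, t₁ ≤ t₂ → V (ξ t₂) ≤ V (ξ t₁) :=
      fun t₁ t₂ h => antitone_nat_of_succ_le (f := fun t => V (ξ t)) hmono h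
    have hV0 : V (ξ 0) ≤ Mσ := hzσmax hinit
    have hVle : ∀ t, V (ξ t) ≤ Mσ := fun t => le_trans (hanti 0 t (Nat.zero_le t)) hV0
    have hconf : ∀ t, Metric.infDist (ξ t) A ≤ σh := by
      intro t
      refine le_trans ?_ (le_max_left rσ (ε+1))
      by_contra hcon
      push_neg at hcon
      exact absurd (hVle t) (not_le_of_gt (hrσ _ hcon))
    -- main descent claim
    have hclaim : ∀ t : ℕ, V (ξ t) < μ ∨ V (ξ t) ≤ Mσ - t * d := by
      intro t
      induction t with
      | zero => right; simpa using hV0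
      | succ k ih =>
        rcases lt_or_ge (V (ξ k)) μ with hk | hk
        · left; exact lt_of_le_of_lt (hmono k) hk
        · have hkband : ξ k ∈ Kb := by
            refine ⟨hXit k, ?_, hconf k⟩
            simp only [Set.mem_setOf_eq]
            by_contra hcon
            push_neg at hcon
            have : V (ξ k) ≤ V zε := hzεmax (le_of_lt hcon)
            linarith
          obtain ⟨s, hsmem, heq⟩ := hsol.2 k
          obtain ⟨hg0, hle⟩ := hstep α hα hαle (ξ k) (hXit k) s hsmem
          have hφk : c ≤ φ (ξ k) := hc _ hkband
          have hgk : φ (ξ k) ≤ ⟪gradient V (ξ k), s⟫ :=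
            hφle (ξ k) (hXit k) hkband.2.1 hkband.2.2 s hsmem
          have h3 : (α/2) * c ≤ (α/2) * ⟪gradient V (ξ k), s⟫ :=
            mul_le_mul_of_nonneg_left (hφk.trans hgk) (by positivity)
          have hdec : V (ξ (k+1)) ≤ V (ξ k) - d := by
            rw [heq, hd]
            linarith
          rcases ih with ih | ih
          · left; exact lt_of_le_of_lt (hmono k) ih
          · right
            push_cast
            have hk1 : (k:ℝ) * d + d = ((k:ℝ)+1) * d := by ring
            linarith
    -- conclusion
    have hVtμ : V (ξ t) < μ := by
      rcases hclaim t with h | h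
      · exact h
      · have htT : (T:ℝ) * d ≤ (t:ℝ) * d :=
          mul_le_mul_of_nonneg_right (by exact_mod_cast ht) hd0.le
        linarith
    have hmem : ξ t ∈ {z | Metric.infDist z A ≤ ρa} := hμ _ hVtμ
    rw [Metric.infDist_zero_of_mem hmem]
    exact hε'.le
end

section
/- Consider the iterative method y⁺ = P_Ξ(y − α s), s ∈ Ψ(y), where Ξ ⊆ ℝⁿ is nonempty, closed and convex, 𝒜 ⊆ Ξ is nonempty and compact, V : ℝⁿ → ℝ is differentiable, nonnegative, positive definite and radially unbounded with respect to 𝒜, and Ψ : ℝⁿ → Set ℝⁿ is SPSP with respect to V on Ξ. Assume there exists w > 0 such that for every α > 0, every y ∈ Ξ and every s ∈ Ψ(y), V(P_Ξ(y − α s)) − V(y) ≤ −α ⟨∇V(y), s⟩ + α² w ‖s‖². Assume further that for every σ > 0 there exists B > 0 such that ‖s‖ ≤ B for all y ∈ Ξ with dist(y,𝒜) ≤ σ and all s ∈ Ψ(y). Then 𝒜 is semiglobally, practically, asymptotically stable (SPAS) for the method with the gain α as parameter. -/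
open Metric RealInnerProductSpace

theorem isCompact_distset {n : ℕ} {A : Set (EuclideanSpace ℝ (Fin n))} (hA : IsCompact A)
    (hAne : A.Nonempty) {r : ℝ} (hr : 0 ≤ r) :
    IsCompact {y : EuclideanSpace ℝ (Fin n) | Metric.infDist y A ≤ r} := by
  have h : {y : EuclideanSpace ℝ (Fin n) | Metric.infDist y A ≤ r} = Metric.cthickening r A := by
    ext y
    simp only [Set.mem_setOf_eq, Metric.mem_cthickening_iff, Metric.infDist]
    exact (ENNReal.le_ofReal_iff_toReal_le (Metric.infEdist_ne_top hAne) hr).symm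
  rw [h]
  exact hA.cthickening

theorem proj_contract {n : ℕ} {Xi : Set (EuclideanSpace ℝ (Fin n))} (hXicv : Convex ℝ Xi)
    (P : EuclideanSpace ℝ (Fin n) → EuclideanSpace ℝ (Fin n))
    (hP : ∀ x, P x ∈ Xi ∧ ∀ z ∈ Xi, ‖x - P x‖ ≤ ‖x - z‖) :
    ∀ x, ∀ z ∈ Xi, ‖P x - z‖ ≤ ‖x - z‖ := by
  intro x z hz
  obtain ⟨hPx, hmin⟩ := hP x
  have key : ⟪x - P x, z - P x⟫ ≤ 0 := by
    by_contra hc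
    push_neg at hc
    have hineq : ∀ t : ℝ, 0 < t → t ≤ 1 →
        2 * t * ⟪x - P x, z - P x⟫ ≤ t ^ 2 * ‖z - P x‖ ^ 2 := by
      intro t ht0 ht1
      have hu : P x + t • (z - P x) ∈ Xi := by
        have h2 := hXicv hPx hz (by linarith : (0:ℝ) ≤ 1 - t) ht0.le (by ring)
        convert h2 using 1
        module
      have h2 := hmin _ hu
      have h3 : ‖x - P x‖ ^ 2 ≤ ‖x - (P x + t • (z - P x))‖ ^ 2 :=
        pow_le_pow_left₀ (norm_nonneg _) h2 2
      have hexp : ‖x - (P x + t • (z - P x))‖ ^ 2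
          = ‖x - P x‖ ^ 2 - 2 * t * ⟪x - P x, z - P x⟫ + t ^ 2 * ‖z - P x‖ ^ 2 := by
        have h4 : x - (P x + t • (z - P x)) = (x - P x) - t • (z - P x) := by module
        rw [h4, norm_sub_sq_real, real_inner_smul_right, norm_smul, Real.norm_eq_abs,
          abs_of_pos ht0]
        ring
      rw [hexp] at h3
      linarith
    set N := ‖z - P x‖ ^ 2 with hN
    have hN0 : 0 ≤ N := sq_nonneg _
    set t := min 1 (⟪x - P x, z - P x⟫ / (N + 1)) with ht
    have ht0 : 0 < t := lt_min one_pos (div_pos hc (by linarith))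
    have ht1 : t ≤ 1 := min_le_left _ _
    have h5 := hineq t ht0 ht1
    have h6 : t * (N + 1) ≤ ⟪x - P x, z - P x⟫ := by
      rw [← le_div_iff₀ (by linarith : (0:ℝ) < N + 1)]
      exact min_le_right _ _
    nlinarith [mul_le_mul_of_nonneg_left h6 ht0.le, mul_pos ht0 hc, mul_pos ht0 ht0]
  have hsq : ‖z - P x‖ ^ 2 ≤ ‖x - z‖ ^ 2 := by
    have h4 : x - z = (x - P x) - (z - P x) := by module
    have h5 : ‖x - z‖ ^ 2 = ‖x - P x‖ ^ 2 - 2 * ⟪x - P x, z - P x⟫ + ‖z - P x‖ ^ 2 := by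
      rw [h4, norm_sub_sq_real]
    nlinarith [sq_nonneg ‖x - P x‖]
  rw [show ‖P x - z‖ = ‖z - P x‖ from norm_sub_rev _ _]
  nlinarith [norm_nonneg (z - P x), norm_nonneg (x - z)]

theorem band_min {n : ℕ} {Xi A : Set (EuclideanSpace ℝ (Fin n))} (hXicl : IsClosed Xi)
    (hAcp : IsCompact A) (hAne : A.Nonempty) {φ : EuclideanSpace ℝ (Fin n) → ℝ}
    (hφc : Continuous φ) {ε R : ℝ} (hR : 0 ≤ R)
    (hφpos : ∀ y ∈ Xi, ε ≤ Metric.infDist y A → Metric.infDist y A ≤ R → 0 < φ y) :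
    ∃ c > (0:ℝ), ∀ y ∈ Xi, ε ≤ Metric.infDist y A → Metric.infDist y A ≤ R → c ≤ φ y := by
  set Γ := (Xi ∩ {y | ε ≤ Metric.infDist y A}) ∩ {y | Metric.infDist y A ≤ R} with hΓ
  rcases Γ.eq_empty_or_nonempty with hemp | hne
  · refine ⟨1, one_pos, fun y hy h1 h2 => ?_⟩
    exact absurd (hemp ▸ (⟨⟨hy, h1⟩, h2⟩ : y ∈ Γ)) (Set.notMem_empty y)
  · have hΓcl : IsClosed (Xi ∩ {y | ε ≤ Metric.infDist y A}) :=
      hXicl.inter (isClosed_le continuous_const (Metric.continuous_infDist_pt A))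
    have hΓc : IsCompact Γ := (isCompact_distset hAcp hAne hR).inter_left hΓcl
    obtain ⟨y0, hy0, hmin⟩ := hΓc.exists_isMinOn hne hφc.continuousOn
    exact ⟨φ y0, hφpos y0 hy0.1.1 hy0.1.2 hy0.2,
      fun y hy h1 h2 => hmin (⟨⟨hy, h1⟩, h2⟩ : y ∈ Γ)⟩

theorem bandV {n : ℕ} {Xi A : Set (EuclideanSpace ℝ (Fin n))} (hXicl : IsClosed Xi)
    (hXicv : Convex ℝ Xi) (hAcp : IsCompact A) (hAne : A.Nonempty) (hAXi : A ⊆ Xi)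
    {V : EuclideanSpace ℝ (Fin n) → ℝ} (hVc : Continuous V)
    {ε L θ : ℝ} (hε : 0 ≤ ε) (hθ : 0 < θ)
    (hL : ∀ y ∈ Xi, Metric.infDist y A ≤ ε → V y ≤ L) :
    ∃ δ > (0:ℝ), ∀ y ∈ Xi, Metric.infDist y A ≤ ε + δ → V y ≤ L + θ := by
  have hKc : IsCompact (Xi ∩ {y | Metric.infDist y A ≤ ε}) :=
    (isCompact_distset hAcp hAne hε).inter_left hXicl
  have hU : IsOpen (V ⁻¹' Set.Iio (L + θ)) := isOpen_Iio.preimage hVc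
  have hKU : Xi ∩ {y | Metric.infDist y A ≤ ε} ⊆ V ⁻¹' Set.Iio (L + θ) := by
    intro y hy
    exact Set.mem_preimage.mpr (lt_of_le_of_lt (hL y hy.1 hy.2) (by linarith))
  obtain ⟨δ, hδ0, hsub⟩ := hKc.exists_thickening_subset_open hU hKU
  refine ⟨δ / 2, by linarith, ?_⟩
  intro y hy hyd
  obtain ⟨a, haA, hda⟩ := hAcp.exists_infDist_eq_dist hAne y
  have hmem : y ∈ Metric.thickening δ (Xi ∩ {y | Metric.infDist y A ≤ ε}) := by
    rcases le_or_gt (dist y a) ε with hc | hc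
    · exact Metric.self_subset_thickening hδ0 _ ⟨hy, by rw [Set.mem_setOf_eq, hda]; exact hc⟩
    · have hd0 : 0 < dist y a := lt_of_le_of_lt hε hc
      set c : ℝ := ε / dist y a with hcdef
      have hc0 : 0 ≤ c := div_nonneg hε hd0.le
      have hc1 : c ≤ 1 := by rw [div_le_one hd0]; linarith
      set z := (1 - c) • a + c • y with hzdef
      have hzXi : z ∈ Xi := hXicv (hAXi haA) hy (by linarith) hc0 (by ring)
      have hza : z - a = c • (y - a) := by rw [hzdef]; module
      have hyz : y - z = (1 - c) • (y - a) := by rw [hzdef]; module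
      have hdza : dist z a = ε := by
        rw [dist_eq_norm, hza, norm_smul, Real.norm_eq_abs, abs_of_nonneg hc0, ← dist_eq_norm,
          hcdef]
        field_simp
      have hdyz : dist y z = dist y a - ε := by
        rw [dist_eq_norm, hyz, norm_smul, Real.norm_eq_abs,
          abs_of_nonneg (by linarith : (0:ℝ) ≤ 1 - c), ← dist_eq_norm, hcdef]
        field_simp
      refine Metric.mem_thickening_iff.mpr ⟨z, ⟨hzXi, ?_⟩, ?_⟩
      · rw [Set.mem_setOf_eq]
        calc Metric.infDist z A ≤ dist z a := Metric.infDist_le_dist_of_mem haA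
        _ = ε := hdza
      · rw [hdyz]
        rw [hda] at hyd
        linarith
  have h2 := hsub hmem
  simp only [Set.mem_preimage, Set.mem_Iio] at h2
  linarith

set_option maxHeartbeats 1000000 in
/-- For the iterative method `y⁺ = P_Ξ(y − α s)`, `s ∈ Ψ(y)`, with `Ξ`
nonempty closed convex, `A ⊆ Ξ` nonempty compact, `V` differentiable, nonnegative,
positive definite and radially unbounded with respect to `A`, `Ψ` SPSP with respect to
`V` on `Ξ`, a descent inequality with constant `w > 0`, and local boundedness of the
search directions: the set `A` is SPAS with the gain `α` as parameter. -/
theorem stmt3 {n : ℕ} (Xi A : Set (EuclideanSpace ℝ (Fin n)))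
    (hXine : Xi.Nonempty) (hXicl : IsClosed Xi) (hXicv : Convex ℝ Xi)
    (hAne : A.Nonempty) (hAcp : IsCompact A) (hAXi : A ⊆ Xi)
    (V : EuclideanSpace ℝ (Fin n) → ℝ) (hVdiff : Differentiable ℝ V)
    (hVnn : ∀ y, 0 ≤ V y) (hVzero : ∀ y ∈ A, V y = 0) (hVpos : ∀ y ∉ A, 0 < V y)
    (hVru : ∀ B : ℝ, ∃ r > (0:ℝ), ∀ y, r < Metric.infDist y A → B < V y)
    (Ψ : EuclideanSpace ℝ (Fin n) → Set (EuclideanSpace ℝ (Fin n)))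
    (hSPSP : IsSPSP A Xi V Ψ)
    (P : EuclideanSpace ℝ (Fin n) → EuclideanSpace ℝ (Fin n))
    (hP : ∀ x, P x ∈ Xi ∧ ∀ z ∈ Xi, ‖x - P x‖ ≤ ‖x - z‖)
    (w : ℝ) (hw : 0 < w)
    (hdesc : ∀ α : ℝ, 0 < α → ∀ y ∈ Xi, ∀ s ∈ Ψ y,
      V (P (y - α • s)) - V y ≤ -α * ⟪gradient V y, s⟫ + α^2 * w * ‖s‖^2)
    (hbdd : ∀ σ > (0:ℝ), ∃ B > (0:ℝ), ∀ y ∈ Xi, Metric.infDist y A ≤ σ →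
      ∀ s ∈ Ψ y, ‖s‖ ≤ B) :
    IsSPAS A Xi (fun α ξ =>
      ξ 0 ∈ Xi ∧ ∀ t : ℕ, ∃ s ∈ Ψ (ξ t), ξ (t+1) = P (ξ t - α • s)) := by
  obtain ⟨ε, hε0, b, hb0, hband, hφall⟩ := hSPSP
  -- the maximum L of V on the band Xi ∩ {d ≤ ε}
  have hKεc : IsCompact (Xi ∩ {y | infDist y A ≤ ε}) :=
    (isCompact_distset hAcp hAne hε0).inter_left hXicl
  have hKεne : (Xi ∩ {y | infDist y A ≤ ε}).Nonempty := by
    obtain ⟨a, ha⟩ := hAne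
    exact ⟨a, hAXi ha, by simp only [Set.mem_setOf_eq, infDist_zero_of_mem ha]; exact hε0⟩
  obtain ⟨yM, hyM, hyMmax⟩ := hKεc.exists_isMaxOn hKεne hVdiff.continuous.continuousOn
  have hLub : ∀ y ∈ Xi, infDist y A ≤ ε → V y ≤ V yM := fun y hy hyd => hyMmax ⟨hy, hyd⟩
  set L := V yM with hLdef
  obtain ⟨r, hr0, hrV⟩ := hVru (L + 1)
  have hρ'0 : (0:ℝ) < max r ε := lt_of_lt_of_le hr0 (le_max_left _ _)
  constructor
  · -- practical stability
    refine ⟨max r ε, hρ'0, ?_⟩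
    intro ρ hρ
    have hρε : ε < ρ := lt_of_le_of_lt (le_max_right r ε) hρ
    have hρr : r < ρ := lt_of_le_of_lt (le_max_left r ε) hρ
    have hρ0 : 0 < ρ := hr0.trans hρr
    obtain ⟨φ, hφc, hφpos, -, hφlb⟩ := hφall ρ hρε
    obtain ⟨B, hB0, hBs⟩ := hbdd ρ hρ0
    obtain ⟨cφ, hcφ0, hcφle⟩ := band_min hXicl hAcp hAne hφc hρ0.le hφpos
    obtain ⟨δ, hδ0, hδV⟩ := bandV hXicl hXicv hAcp hAne hAXi hVdiff.continuous hε0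
      one_half_pos hLub
    have hwB : (0:ℝ) < w * B ^ 2 := by positivity
    refine ⟨δ, hδ0, min (min (1/2) (1/(2*(b+1)))) (min (1/(w*B^2)) (cφ/(w*B^2))),
      by positivity, ?_⟩
    intro α hα0 hαbar ξ hξ hξ0
    have hα1 : α ≤ 1/2 := hαbar.trans ((min_le_left _ _).trans (min_le_left _ _))
    have hα2 : α ≤ 1/(2*(b+1)) := hαbar.trans ((min_le_left _ _).trans (min_le_right _ _))
    have hα3 : α ≤ 1/(w*B^2) := hαbar.trans ((min_le_right _ _).trans (min_le_left _ _))
    have hα4 : α ≤ cφ/(w*B^2) := hαbar.trans ((min_le_right _ _).trans (min_le_right _ _))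
    have hαb : α * b ≤ 1/2 := by
      have h6 := (le_div_iff₀ (by positivity : (0:ℝ) < 2*(b+1))).mp hα2
      nlinarith
    have hαw1 : α * (w * B ^ 2) ≤ 1 := (le_div_iff₀ hwB).mp hα3
    have hαwc : α * (w * B ^ 2) ≤ cφ := (le_div_iff₀ hwB).mp hα4
    have hsq1 : α ^ 2 * w * B ^ 2 ≤ α := by nlinarith [mul_le_mul_of_nonneg_left hαw1 hα0.le]
    have hsq2 : α ^ 2 * w * B ^ 2 ≤ α * cφ := by
      nlinarith [mul_le_mul_of_nonneg_left hαwc hα0.le]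
    have hinv : ∀ t, ξ t ∈ Xi ∧ V (ξ t) ≤ L + 1 := by
      intro t
      induction t with
      | zero => exact ⟨hξ.1, (hδV _ hξ.1 (hξ0.trans (by linarith))).trans (by linarith)⟩
      | succ t ih =>
        obtain ⟨hyXi, hyV⟩ := ih
        obtain ⟨s, hs, hstep⟩ := hξ.2 t
        have hd : infDist (ξ t) A ≤ ρ := by
          by_contra hcon
          push_neg at hcon
          have := hrV _ (hρr.trans hcon)
          linarith
        have hsB : ‖s‖ ≤ B := hBs _ hyXi hd s hs
        have hdesc' := hdesc α hα0 _ hyXi s hs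
        have hs2 : α ^ 2 * w * ‖s‖ ^ 2 ≤ α ^ 2 * w * B ^ 2 := by
          have h01 := pow_le_pow_left₀ (norm_nonneg s) hsB 2
          have h02 := mul_le_mul_of_nonneg_left h01 (by positivity : (0:ℝ) ≤ α ^ 2 * w)
          linarith
        refine ⟨by rw [hstep]; exact (hP _).1, ?_⟩
        rcases le_or_gt (infDist (ξ t) A) ε with hce | hce
        · have hin := hband _ hyXi hce s hs
          have hmul : α * (-b) ≤ α * ⟪gradient V (ξ t), s⟫ :=
            mul_le_mul_of_nonneg_left hin hα0.le
          have hVy : V (ξ t) ≤ L := hLub _ hyXi hce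
          rw [hstep]
          linarith [hdesc', hmul, hs2, hsq1, hαb, hα1]
        · have hin := hφlb _ hyXi hce.le hd s hs
          have hcle := hcφle _ hyXi hce.le hd
          have hmul : α * cφ ≤ α * ⟪gradient V (ξ t), s⟫ :=
            mul_le_mul_of_nonneg_left (hcle.trans hin) hα0.le
          rw [hstep]
          linarith [hdesc', hmul, hs2, hsq2, mul_pos hα0 hcφ0]
    intro t
    by_contra hcon
    push_neg at hcon
    have := hrV _ (hρr.trans hcon)
    have h2 := (hinv t).2
    linarith
  · -- semiglobal practical attractivity
    refine ⟨max r ε, hρ'0, ?_⟩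
    intro σ ρa hρa hσ
    have hεle : ε ≤ max r ε := le_max_right r ε
    have hεσ : ε < σ := lt_of_le_of_lt hεle (hρa.trans hσ)
    have hσ0 : 0 < σ := hρ'0.trans (hρa.trans hσ)
    -- maximum of V on Xi ∩ {d ≤ σ}
    have hKσc : IsCompact (Xi ∩ {y | infDist y A ≤ σ}) :=
      (isCompact_distset hAcp hAne hσ0.le).inter_left hXicl
    have hKσne : (Xi ∩ {y | infDist y A ≤ σ}).Nonempty := by
      obtain ⟨a, ha⟩ := hAne
      exact ⟨a, hAXi ha, by simp only [Set.mem_setOf_eq, infDist_zero_of_mem ha]; exact hσ0.le⟩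
    obtain ⟨zM, hzM, hzMmax⟩ := hKσc.exists_isMaxOn hKσne hVdiff.continuous.continuousOn
    have hMub : ∀ y ∈ Xi, infDist y A ≤ σ → V y ≤ V zM := fun y hy hyd => hzMmax ⟨hy, hyd⟩
    set M := V zM with hMdef
    have hLM : L ≤ M := hMub yM hyM.1 (hyM.2.trans (hεσ.le.trans (le_refl σ)))
    obtain ⟨R₀, hR₀0, hR₀V⟩ := hVru (M + 1)
    set R := max R₀ σ with hRdef
    have hRε : ε < R := lt_of_lt_of_le hεσ (le_max_right _ _)
    have hR0 : (0:ℝ) < R := lt_of_lt_of_le hR₀0 (le_max_left _ _)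
    obtain ⟨φ, hφc, hφpos, -, hφlb⟩ := hφall R hRε
    obtain ⟨B, hB0, hBs⟩ := hbdd R hR0
    obtain ⟨cφ, hcφ0, hcφle⟩ := band_min hXicl hAcp hAne hφc hR0.le hφpos
    have hwB : (0:ℝ) < w * B ^ 2 := by positivity
    refine ⟨min (min (1/2) (1/(2*(b+1)))) (min (1/(w*B^2)) (cφ/(2*(w*B^2)))),
      by positivity, ?_⟩
    intro α hα0 hαbar ε' hε'0 hincl
    have hα1 : α ≤ 1/2 := hαbar.trans ((min_le_left _ _).trans (min_le_left _ _))
    have hα2 : α ≤ 1/(2*(b+1)) := hαbar.trans ((min_le_left _ _).trans (min_le_right _ _))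
    have hα3 : α ≤ 1/(w*B^2) := hαbar.trans ((min_le_right _ _).trans (min_le_left _ _))
    have hα4 : α ≤ cφ/(2*(w*B^2)) := hαbar.trans ((min_le_right _ _).trans (min_le_right _ _))
    have hαb : α * b ≤ 1/2 := by
      have h6 := (le_div_iff₀ (by positivity : (0:ℝ) < 2*(b+1))).mp hα2
      nlinarith
    have hαw1 : α * (w * B ^ 2) ≤ 1 := (le_div_iff₀ hwB).mp hα3
    have hαwc : α * (2 * (w * B ^ 2)) ≤ cφ := (le_div_iff₀ (by positivity)).mp hα4
    have hsq1 : α ^ 2 * w * B ^ 2 ≤ α := by nlinarith [mul_le_mul_of_nonneg_left hαw1 hα0.le]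
    have hsq2 : α ^ 2 * w * B ^ 2 ≤ α * cφ / 2 := by
      nlinarith [mul_le_mul_of_nonneg_left hαwc hα0.le]
    refine ⟨Nat.ceil (2*(M+1)/(α*cφ)), ?_⟩
    intro ξ hξ hξ0 t ht
    -- invariant
    have hinv : ∀ t, ξ t ∈ Xi ∧ V (ξ t) ≤ M + 1 := by
      intro t
      induction t with
      | zero => exact ⟨hξ.1, (hMub _ hξ.1 hξ0).trans (by linarith)⟩
      | succ t ih =>
        obtain ⟨hyXi, hyV⟩ := ih
        obtain ⟨s, hs, hstep⟩ := hξ.2 t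
        have hd : infDist (ξ t) A ≤ R := by
          by_contra hcon
          push_neg at hcon
          have := hR₀V _ (lt_of_le_of_lt (le_max_left R₀ σ) hcon)
          linarith
        have hsB : ‖s‖ ≤ B := hBs _ hyXi hd s hs
        have hdesc' := hdesc α hα0 _ hyXi s hs
        have hs2 : α ^ 2 * w * ‖s‖ ^ 2 ≤ α ^ 2 * w * B ^ 2 := by
          have h01 := pow_le_pow_left₀ (norm_nonneg s) hsB 2
          have h02 := mul_le_mul_of_nonneg_left h01 (by positivity : (0:ℝ) ≤ α ^ 2 * w)
          linarith
        refine ⟨by rw [hstep]; exact (hP _).1, ?_⟩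
        rcases le_or_gt (infDist (ξ t) A) ε with hce | hce
        · have hin := hband _ hyXi hce s hs
          have hmul : α * (-b) ≤ α * ⟪gradient V (ξ t), s⟫ :=
            mul_le_mul_of_nonneg_left hin hα0.le
          have hVy : V (ξ t) ≤ L := hLub _ hyXi hce
          rw [hstep]
          linarith [hdesc', hmul, hs2, hsq1, hαb, hα1]
        · have hin := hφlb _ hyXi hce.le hd s hs
          have hcle := hcφle _ hyXi hce.le hd
          have hmul : α * cφ ≤ α * ⟪gradient V (ξ t), s⟫ :=
            mul_le_mul_of_nonneg_left (hcle.trans hin) hα0.le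
          rw [hstep]
          linarith [hdesc', hmul, hs2, hsq2, mul_pos hα0 hcφ0]
    -- one descent step while above level L + 1
    have hstepdec : ∀ t, L + 1 < V (ξ t) → V (ξ (t+1)) ≤ V (ξ t) - α * cφ / 2 := by
      intro t hVt
      obtain ⟨hyXi, hyV⟩ := hinv t
      obtain ⟨s, hs, hstep⟩ := hξ.2 t
      have hd : infDist (ξ t) A ≤ R := by
        by_contra hcon
        push_neg at hcon
        have := hR₀V _ (lt_of_le_of_lt (le_max_left R₀ σ) hcon)
        linarith
      have hdε : ε < infDist (ξ t) A := by
        by_contra hcon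
        push_neg at hcon
        have := hLub _ hyXi hcon
        linarith
      have hsB : ‖s‖ ≤ B := hBs _ hyXi hd s hs
      have hdesc' := hdesc α hα0 _ hyXi s hs
      have hs2 : α ^ 2 * w * ‖s‖ ^ 2 ≤ α ^ 2 * w * B ^ 2 := by
        have h01 := pow_le_pow_left₀ (norm_nonneg s) hsB 2
        have h02 := mul_le_mul_of_nonneg_left h01 (by positivity : (0:ℝ) ≤ α ^ 2 * w)
        linarith
      have hin := hφlb _ hyXi hdε.le hd s hs
      have hcle := hcφle _ hyXi hdε.le hd
      have hmul : α * cφ ≤ α * ⟪gradient V (ξ t), s⟫ :=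
        mul_le_mul_of_nonneg_left (hcle.trans hin) hα0.le
      rw [hstep]
      linarith [hdesc', hmul, hs2, hsq2]
    -- absorbing property of the sublevel set {V ≤ L + 1}
    have habs : ∀ t, V (ξ t) ≤ L + 1 → V (ξ (t+1)) ≤ L + 1 := by
      intro t hVt
      obtain ⟨hyXi, hyV⟩ := hinv t
      obtain ⟨s, hs, hstep⟩ := hξ.2 t
      have hd : infDist (ξ t) A ≤ R := by
        by_contra hcon
        push_neg at hcon
        have := hR₀V _ (lt_of_le_of_lt (le_max_left R₀ σ) hcon)
        linarith
      have hsB : ‖s‖ ≤ B := hBs _ hyXi hd s hs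
      have hdesc' := hdesc α hα0 _ hyXi s hs
      have hs2 : α ^ 2 * w * ‖s‖ ^ 2 ≤ α ^ 2 * w * B ^ 2 := by
        have h01 := pow_le_pow_left₀ (norm_nonneg s) hsB 2
        have h02 := mul_le_mul_of_nonneg_left h01 (by positivity : (0:ℝ) ≤ α ^ 2 * w)
        linarith
      rcases le_or_gt (infDist (ξ t) A) ε with hce | hce
      · have hin := hband _ hyXi hce s hs
        have hmul : α * (-b) ≤ α * ⟪gradient V (ξ t), s⟫ :=
          mul_le_mul_of_nonneg_left hin hα0.le
        have hVy : V (ξ t) ≤ L := hLub _ hyXi hce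
        rw [hstep]
        linarith [hdesc', hmul, hs2, hsq1, hαb, hα1]
      · have hin := hφlb _ hyXi hce.le hd s hs
        have hcle := hcφle _ hyXi hce.le hd
        have hmul : α * cφ ≤ α * ⟪gradient V (ξ t), s⟫ :=
          mul_le_mul_of_nonneg_left (hcle.trans hin) hα0.le
        rw [hstep]
        linarith [hdesc', hmul, hs2, hsq2, mul_pos hα0 hcφ0]
    -- strict decrease until the level L + 1 is reached
    have hdrop : ∀ t, (∀ t' < t, L + 1 < V (ξ t')) → V (ξ t) ≤ M - t * (α * cφ / 2) := by
      intro t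
      induction t with
      | zero => intro _; simpa using hMub _ hξ.1 hξ0
      | succ t ih =>
        intro hgt
        have ihv := ih (fun t' ht' => hgt t' (ht'.trans (Nat.lt_succ_self t)))
        have hVt : L + 1 < V (ξ t) := hgt t (Nat.lt_succ_self t)
        have h7 := hstepdec t hVt
        push_cast
        push_cast at ihv
        linarith
    -- there is a time t0 ≤ T at which V (ξ t0) ≤ L + 1
    have hex : ∃ t0, t0 ≤ Nat.ceil (2*(M+1)/(α*cφ)) ∧ V (ξ t0) ≤ L + 1 := by
      by_contra hcon
      push_neg at hcon
      set T := Nat.ceil (2*(M+1)/(α*cφ)) with hT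
      have hdropT := hdrop T (fun t' ht' => hcon t' ht'.le)
      have hTle : 2*(M+1)/(α*cφ) ≤ (T:ℝ) := Nat.le_ceil _
      have hαc : (0:ℝ) < α * cφ := mul_pos hα0 hcφ0
      have h8 : M + 1 ≤ (T:ℝ) * (α * cφ / 2) := by
        have h9 := mul_le_mul_of_nonneg_right hTle (by positivity : (0:ℝ) ≤ α * cφ / 2)
        calc M + 1 = 2*(M+1)/(α*cφ) * (α * cφ / 2) := by field_simp
        _ ≤ (T:ℝ) * (α * cφ / 2) := h9
      have h10 := hVnn (ξ T)
      linarith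
    obtain ⟨t0, ht0T, ht0V⟩ := hex
    have hafter : ∀ t' ≥ t0, V (ξ t') ≤ L + 1 := by
      intro t' ht'
      induction t', ht' using Nat.le_induction with
      | base => exact ht0V
      | succ t' ht' ih => exact habs t' ih
    have hVt : V (ξ t) ≤ L + 1 := hafter t (ht0T.trans ht)
    have hdr : infDist (ξ t) A ≤ r := by
      by_contra hcon
      push_neg at hcon
      have := hrV _ hcon
      linarith
    have hmem : ξ t ∈ {z | infDist z A ≤ ρa} := by
      have : infDist (ξ t) A ≤ max r ε := hdr.trans (le_max_left _ _)
      exact le_of_lt (lt_of_le_of_lt this hρa)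
    rw [infDist_zero_of_mem hmem]
    exact hε'0.le
end

section
/- Consider the iterative method y⁺ = P_Ξ(y − α s(y)), where Ξ ⊆ ℝⁿ is nonempty, closed and convex, 𝒜 ⊆ Ξ is nonempty and compact, V : ℝⁿ → ℝ is differentiable, nonnegative, positive definite and radially unbounded with respect to 𝒜, and the single-valued map Ψ(y) = {s(y)} is SPSP with respect to V on Ξ. Assume there exists w > 0 such that for every α > 0 and every y ∈ Ξ, V(P_Ξ(y − α s(y))) − V(y) ≤ −α ⟨∇V(y), s(y)⟩ + α² w ‖s(y)‖². Assume further that for every σ > 0 there exists L > 0 such that ‖s(y₁) − s(y₂)‖ ≤ L‖y₁ − y₂‖ for all y₁, y₂ ∈ Ξ with dist(y₁,𝒜) ≤ σ and dist(y₂,𝒜) ≤ σ. Then 𝒜 is semiglobally, practically, asymptotically stable (SPAS) for the method with the gain α as parameter. -/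
open Metric RealInnerProductSpace

lemma onestep {n : ℕ} {Xi A : Set (EuclideanSpace ℝ (Fin n))}
    {V : EuclideanSpace ℝ (Fin n) → ℝ}
    {s P : EuclideanSpace ℝ (Fin n) → EuclideanSpace ℝ (Fin n)}
    {w ε₀ b c C R m M α : ℝ}
    (hw : 0 < w)
    (hdesc : ∀ y ∈ Xi, V (P (y - α • s y)) - V y ≤ -α * ⟪gradient V y, s y⟫ + α^2 * w * ‖s y‖^2)
    (hnear : ∀ y ∈ Xi, Metric.infDist y A ≤ ε₀ → -b ≤ ⟪gradient V y, s y⟫)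
    (hc : ∀ y ∈ Xi, Metric.infDist y A ≤ ε₀ → V y ≤ c)
    (hC : c + 1 ≤ C)
    (hR : ∀ y ∈ Xi, V y ≤ C → Metric.infDist y A ≤ R)
    (hM : ∀ y ∈ Xi, Metric.infDist y A ≤ R → ‖s y‖ ≤ M)
    (hm : ∀ y ∈ Xi, ε₀ < Metric.infDist y A → Metric.infDist y A ≤ R → m ≤ ⟪gradient V y, s y⟫)
    (hα : 0 < α) (hα2 : α * b + α^2 * w * M^2 ≤ 1) (hα3 : α^2 * w * M^2 ≤ α * m / 2) :
    ∀ y ∈ Xi, V y ≤ C →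
      V (P (y - α • s y)) ≤ C ∧ (c < V y → V (P (y - α • s y)) ≤ V y - α * m / 2) := by
  intro y hy hVy
  have hdist := hR y hy hVy
  have hsM := hM y hy hdist
  have hd := hdesc y hy
  have hs2 : α^2 * w * ‖s y‖^2 ≤ α^2 * w * M^2 := by
    have h1 : ‖s y‖^2 ≤ M^2 := by nlinarith [norm_nonneg (s y)]
    have h2 : (0:ℝ) ≤ α^2 * w := by positivity
    nlinarith
  by_cases hεc : Metric.infDist y A ≤ ε₀
  · have hg := hnear y hy hεc
    have hVc := hc y hy hεc
    constructor
    · nlinarith [mul_nonneg hα.le (by linarith : (0:ℝ) ≤ ⟪gradient V y, s y⟫ + b)]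
    · intro hcV; exact absurd hVc (not_le.mpr hcV)
  · push_neg at hεc
    have hg := hm y hy hεc hdist
    have hαg : α * m ≤ α * ⟪gradient V y, s y⟫ := mul_le_mul_of_nonneg_left hg hα.le
    have key : V (P (y - α • s y)) ≤ V y - α * m / 2 := by nlinarith
    refine ⟨?_, fun _ => key⟩
    have h0 : (0:ℝ) ≤ α * m / 2 := le_trans (by positivity) hα3
    linarith

/-- For the iterative method `y⁺ = P_Ξ(y − α s(y))` with single-valued
search direction `s`, with `Ξ` nonempty closed convex, `A ⊆ Ξ` nonempty compact, `V`
differentiable, nonnegative, positive definite and radially unbounded with respect to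
`A`, `Ψ(y) = {s(y)}` SPSP with respect to `V` on `Ξ`, a descent inequality with
constant `w > 0`, and `s` locally Lipschitz (Lipschitz on each `Ξ ∩ B̄_σ(A)`): the set
`A` is SPAS with the gain `α` as parameter. -/
theorem stmt4 {n : ℕ} (Xi A : Set (EuclideanSpace ℝ (Fin n)))
    (hXine : Xi.Nonempty) (hXicl : IsClosed Xi) (hXicv : Convex ℝ Xi)
    (hAne : A.Nonempty) (hAcp : IsCompact A) (hAXi : A ⊆ Xi)
    (V : EuclideanSpace ℝ (Fin n) → ℝ) (hVdiff : Differentiable ℝ V)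
    (hVnn : ∀ y, 0 ≤ V y) (hVzero : ∀ y ∈ A, V y = 0) (hVpos : ∀ y ∉ A, 0 < V y)
    (hVru : ∀ B : ℝ, ∃ r > (0:ℝ), ∀ y, r < Metric.infDist y A → B < V y)
    (s : EuclideanSpace ℝ (Fin n) → EuclideanSpace ℝ (Fin n))
    (hSPSP : IsSPSP A Xi V (fun y => {s y}))
    (P : EuclideanSpace ℝ (Fin n) → EuclideanSpace ℝ (Fin n))
    (hP : ∀ x, P x ∈ Xi ∧ ∀ z ∈ Xi, ‖x - P x‖ ≤ ‖x - z‖)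
    (w : ℝ) (hw : 0 < w)
    (hdesc : ∀ α : ℝ, 0 < α → ∀ y ∈ Xi,
      V (P (y - α • s y)) - V y ≤ -α * ⟪gradient V y, s y⟫ + α^2 * w * ‖s y‖^2)
    (hlip : ∀ σ > (0:ℝ), ∃ L > (0:ℝ), ∀ y₁ ∈ Xi, ∀ y₂ ∈ Xi,
      Metric.infDist y₁ A ≤ σ → Metric.infDist y₂ A ≤ σ →
      ‖s y₁ - s y₂‖ ≤ L * ‖y₁ - y₂‖) :
    IsSPAS A Xi (fun α ξ =>
      ξ 0 ∈ Xi ∧ ∀ t : ℕ, ξ (t+1) = P (ξ t - α • s (ξ t))) := by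
  obtain ⟨ε₀, hε₀, b, hb, hnear0, hband⟩ := hSPSP
  have hnear : ∀ y ∈ Xi, Metric.infDist y A ≤ ε₀ → -b ≤ ⟪gradient V y, s y⟫ :=
    fun y hy h => hnear0 y hy h (s y) rfl
  obtain ⟨y₀, hy₀⟩ := hAne
  obtain ⟨D₀, hD₀⟩ := hAcp.isBounded.subset_closedBall y₀
  set D := max D₀ 0 with hDdef
  have hD : ∀ a ∈ A, dist a y₀ ≤ D := fun a ha =>
    le_trans (mem_closedBall.mp (hD₀ ha)) (le_max_left _ _)
  have hDnn : (0:ℝ) ≤ D := le_max_right _ _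
  have hy₀d : Metric.infDist y₀ A = 0 := infDist_zero_of_mem hy₀
  have hball : ∀ ρ : ℝ, {y : EuclideanSpace ℝ (Fin n) | Metric.infDist y A ≤ ρ} ⊆
      Metric.closedBall y₀ (ρ + 1 + D) := by
    intro ρ y hy
    simp only [Set.mem_setOf_eq] at hy
    obtain ⟨a, ha, hda⟩ :=
      (Metric.infDist_lt_iff ⟨y₀, hy₀⟩).mp (lt_of_le_of_lt hy (show ρ < ρ + 1 by linarith))
    have := hD a ha
    simp only [Metric.mem_closedBall]
    calc dist y y₀ ≤ dist y a + dist a y₀ := dist_triangle _ _ _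
      _ ≤ ρ + 1 + D := by linarith
  have hcpt : ∀ ρ : ℝ, IsCompact (Xi ∩ {y | Metric.infDist y A ≤ ρ}) := by
    intro ρ
    refine (isCompact_closedBall y₀ (ρ + 1 + D)).of_isClosed_subset
      (hXicl.inter (isClosed_le (continuous_infDist_pt A) continuous_const)) ?_
    exact fun y hy => hball ρ hy.2
  have hVmax : ∀ ρ : ℝ, 0 ≤ ρ → ∃ c : ℝ, ∀ y ∈ Xi, Metric.infDist y A ≤ ρ → V y ≤ c := by
    intro ρ hρ
    obtain ⟨z, _, hz⟩ := (hcpt ρ).exists_isMaxOn ⟨y₀, hAXi hy₀, by simp [hy₀d, hρ]⟩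
      hVdiff.continuous.continuousOn
    exact ⟨V z, fun y hy hd => isMaxOn_iff.mp hz y ⟨hy, hd⟩⟩
  have hMbound : ∀ ρ : ℝ, 0 ≤ ρ →
      ∃ M > (0:ℝ), ∀ y ∈ Xi, Metric.infDist y A ≤ ρ → ‖s y‖ ≤ M := by
    intro ρ hρ
    obtain ⟨L, hL, hLip⟩ := hlip (ρ + 1) (by linarith)
    refine ⟨‖s y₀‖ + L * (ρ + 1 + D) + 1, by positivity, fun y hy hd => ?_⟩
    have h1 : ‖s y - s y₀‖ ≤ L * ‖y - y₀‖ :=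
      hLip y hy y₀ (hAXi hy₀) (by linarith) (by simp [hy₀d]; linarith)
    have h2 : ‖y - y₀‖ ≤ ρ + 1 + D := by
      have := hball ρ hd
      simpa [dist_eq_norm] using this
    have h3 : ‖s y‖ - ‖s y₀‖ ≤ ‖s y - s y₀‖ := norm_sub_norm_le _ _
    nlinarith
  have hmbound : ∀ R' : ℝ, ε₀ < R' → ∃ m > (0:ℝ), ∀ y ∈ Xi,
      ε₀ < Metric.infDist y A → Metric.infDist y A ≤ R' → m ≤ ⟪gradient V y, s y⟫ := by
    intro R' hR'
    obtain ⟨φ, hφc, hφpos, -, hφle⟩ := hband R' hR'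
    by_cases hne : (Xi ∩ {y | ε₀ ≤ Metric.infDist y A ∧ Metric.infDist y A ≤ R'}).Nonempty
    · have hbcl : IsClosed (Xi ∩ {y | ε₀ ≤ Metric.infDist y A ∧ Metric.infDist y A ≤ R'}) := by
        refine hXicl.inter ?_
        have h1 : IsClosed {y : EuclideanSpace ℝ (Fin n) | ε₀ ≤ Metric.infDist y A} :=
          isClosed_le continuous_const (continuous_infDist_pt A)
        have h2 : IsClosed {y : EuclideanSpace ℝ (Fin n) | Metric.infDist y A ≤ R'} :=
          isClosed_le (continuous_infDist_pt A) continuous_const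
        exact h1.inter h2
      have hbcpt := (hcpt R').of_isClosed_subset hbcl (fun y hy => ⟨hy.1, hy.2.2⟩)
      obtain ⟨z, hz, hzmin⟩ := hbcpt.exists_isMinOn hne hφc.continuousOn
      refine ⟨φ z, hφpos z hz.1 hz.2.1 hz.2.2, fun y hy h1 h2 => ?_⟩
      exact (isMinOn_iff.mp hzmin y ⟨hy, h1.le, h2⟩).trans (hφle y hy h1.le h2 (s y) rfl)
    · exact ⟨1, one_pos, fun y hy h1 h2 => absurd (hne ⟨y, hy, h1.le, h2⟩) (fun h => h)⟩
  have hαfact : ∀ m M : ℝ, 0 < m → 0 < M → ∃ ab > (0:ℝ), ∀ α : ℝ, 0 < α → α ≤ ab →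
      α * b + α^2 * w * M^2 ≤ 1 ∧ α^2 * w * M^2 ≤ α * m / 2 := by
    intro m M hm hM
    refine ⟨min (1/(b + w*M^2 + 1)) (m/(2*w*M^2)),
      lt_min (by positivity) (by positivity), fun α hα hαle => ?_⟩
    have hK : (0:ℝ) < b + w*M^2 + 1 := by positivity
    have h1' : α * (b + w*M^2 + 1) ≤ 1 := by
      have h1 : α ≤ 1/(b + w*M^2 + 1) := hαle.trans (min_le_left _ _)
      calc α * (b + w*M^2 + 1) ≤ (1/(b + w*M^2 + 1)) * (b + w*M^2 + 1) :=
            mul_le_mul_of_nonneg_right h1 hK.le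
        _ = 1 := by field_simp
    have h2' : α * (2*w*M^2) ≤ m := by
      have h2 : α ≤ m/(2*w*M^2) := hαle.trans (min_le_right _ _)
      have hK2 : (0:ℝ) < 2*w*M^2 := by positivity
      calc α * (2*w*M^2) ≤ (m/(2*w*M^2)) * (2*w*M^2) := mul_le_mul_of_nonneg_right h2 hK2.le
        _ = m := by field_simp
    have hwM : (0:ℝ) < w * M^2 := by positivity
    have hα1 : α ≤ 1 := by nlinarith
    constructor
    · have h9 : 0 ≤ α * (1 - α) * (w * M^2) :=
        mul_nonneg (mul_nonneg hα.le (by linarith)) hwM.le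
      nlinarith
    · nlinarith
  -- main fixed constants
  obtain ⟨c, hc⟩ := hVmax (ε₀ + 1) (by linarith)
  have hcε : ∀ y ∈ Xi, Metric.infDist y A ≤ ε₀ → V y ≤ c :=
    fun y hy h => hc y hy (h.trans (by linarith))
  obtain ⟨rs, hrs0, hrs⟩ := hVru (c + 1)
  have hsub : ∀ y, V y ≤ c + 1 → Metric.infDist y A ≤ rs := by
    intro y h
    by_contra hcon
    push_neg at hcon
    exact absurd h (not_le.mpr (hrs y hcon))
  set R := max rs ε₀ + 1 with hRdef
  have hrsR : rs ≤ R := by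
    have := le_max_left rs ε₀; linarith
  have hεR : ε₀ < R := by
    have := le_max_right rs ε₀; linarith
  have hRpos : (0:ℝ) < R := lt_of_le_of_lt hε₀ hεR
  constructor
  · -- practical stability
    refine ⟨R, hRpos, ?_⟩
    intro ρ hρ
    obtain ⟨M, hM, hMs⟩ := hMbound R hRpos.le
    obtain ⟨m, hm, hms⟩ := hmbound R hεR
    obtain ⟨ab, hab, habs⟩ := hαfact m M hm hM
    refine ⟨ε₀ + 1, by linarith, ab, hab, ?_⟩
    intro α hα hαle ξ hSol hd0
    obtain ⟨hξ0, hrec⟩ := hSol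
    obtain ⟨hα2, hα3⟩ := habs α hα hαle
    have hR1 : ∀ y ∈ Xi, V y ≤ c + 1 → Metric.infDist y A ≤ R :=
      fun y _ h => (hsub y h).trans hrsR
    have hos := onestep hw (fun y hy => hdesc α hα y hy) hnear hcε (le_refl (c+1))
      hR1 hMs hms hα hα2 hα3
    have hXiAll : ∀ t, ξ t ∈ Xi := by
      intro t
      induction t with
      | zero => exact hξ0
      | succ k ih => rw [hrec k]; exact (hP _).1
    have hinv : ∀ t, V (ξ t) ≤ c + 1 := by
      intro t
      induction t with
      | zero => exact (hc _ hξ0 hd0).trans (by linarith)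
      | succ k ih => rw [hrec k]; exact (hos _ (hXiAll k) ih).1
    intro t
    exact le_trans (hsub _ (hinv t)) (by linarith)
  · -- semiglobal practical attractivity
    refine ⟨R, hRpos, ?_⟩
    intro σ ρa h1 h2
    have hσ0 : (0:ℝ) ≤ σ := by linarith
    obtain ⟨Vσ, hVσ⟩ := hVmax σ hσ0
    set Ca := max (Vσ + 1) (c + 1) with hCadef
    obtain ⟨ra, hra0, hra⟩ := hVru Ca
    set Ra := max ra ε₀ + 1 with hRadef
    have hraRa : ra ≤ Ra := by
      have := le_max_left ra ε₀; linarith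
    have hεRa : ε₀ < Ra := by
      have := le_max_right ra ε₀; linarith
    have hRa0 : (0:ℝ) < Ra := lt_of_le_of_lt hε₀ hεRa
    obtain ⟨M, hM, hMs⟩ := hMbound Ra hRa0.le
    obtain ⟨m, hm, hms⟩ := hmbound Ra hεRa
    obtain ⟨ab, hab, habs⟩ := hαfact m M hm hM
    refine ⟨ab, hab, ?_⟩
    intro α hα hαle ε hε hsubset
    obtain ⟨hα2, hα3⟩ := habs α hα hαle
    have hκpos : (0:ℝ) < α * m / 2 := by positivity
    refine ⟨⌈Ca / (α * m / 2)⌉₊ + 1, ?_⟩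
    intro ξ hSol hd0
    obtain ⟨hξ0, hrec⟩ := hSol
    have hRA : ∀ y ∈ Xi, V y ≤ Ca → Metric.infDist y A ≤ Ra := by
      intro y _ h
      by_contra hcon
      push_neg at hcon
      exact absurd h (not_le.mpr (hra y (lt_of_le_of_lt hraRa hcon)))
    have hRA' : ∀ y ∈ Xi, V y ≤ c + 1 → Metric.infDist y A ≤ Ra :=
      fun y hy h => hRA y hy (h.trans (le_max_right _ _))
    have hosA := onestep hw (fun y hy => hdesc α hα y hy) hnear hcε
      (le_max_right (Vσ + 1) (c + 1)) hRA hMs hms hα hα2 hα3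
    have hosS := onestep hw (fun y hy => hdesc α hα y hy) hnear hcε (le_refl (c+1))
      hRA' hMs hms hα hα2 hα3
    have hXiAll : ∀ t, ξ t ∈ Xi := by
      intro t
      induction t with
      | zero => exact hξ0
      | succ k ih => rw [hrec k]; exact (hP _).1
    have hinvA : ∀ t, V (ξ t) ≤ Ca := by
      intro t
      induction t with
      | zero =>
        refine (hVσ _ hξ0 hd0).trans ?_
        have := le_max_left (Vσ + 1) (c + 1); linarith
      | succ k ih => rw [hrec k]; exact (hosA _ (hXiAll k) ih).1
    set T := ⌈Ca / (α * m / 2)⌉₊ + 1 with hTdef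
    have hT : Ca < (T:ℝ) * (α * m / 2) := by
      have h := Nat.le_ceil (Ca / (α * m / 2))
      have h' : Ca ≤ (⌈Ca / (α * m / 2)⌉₊ : ℝ) * (α * m / 2) := (div_le_iff₀ hκpos).mp h
      rw [hTdef]
      push_cast
      nlinarith
    have hexist : ∃ t₀, t₀ ≤ T ∧ V (ξ t₀) ≤ c + 1 := by
      by_contra hcon
      push_neg at hcon
      have key : ∀ t, t ≤ T → V (ξ t) ≤ Ca - t * (α * m / 2) := by
        intro t
        induction t with
        | zero => intro _; simpa using hinvA 0
        | succ k ih =>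
          intro hk
          have hk' : k ≤ T := Nat.le_of_succ_le hk
          have h3 := hcon k hk'
          have hdec := (hosA _ (hXiAll k) (hinvA k)).2 (by linarith)
          rw [← hrec k] at hdec
          have := ih hk'
          push_cast
          push_cast at this
          linarith
      have hfin := key T le_rfl
      have := hVnn (ξ T)
      linarith
    obtain ⟨t₀, ht₀T, ht₀⟩ := hexist
    have hafter : ∀ t, t₀ ≤ t → V (ξ t) ≤ c + 1 := by
      intro t ht
      induction t, ht using Nat.le_induction with
      | base => exact ht₀
      | succ k hk ih => rw [hrec k]; exact (hosS _ (hXiAll k) ih).1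
    intro t ht
    have hVt := hafter t (ht₀T.trans ht)
    have hmem : ξ t ∈ {z : EuclideanSpace ℝ (Fin n) | Metric.infDist z A ≤ ρa} := by
      simp only [Set.mem_setOf_eq]
      have := hsub _ hVt
      linarith
    rw [infDist_zero_of_mem hmem]
    exact hε.le
end

section
/- Consider the parameterized discrete-time system ξ⁺ = P_Ξ(f(ξ, π)) on ℝⁿ, where Ξ ⊆ ℝⁿ is nonempty, closed and convex, f : ℝⁿ × ℝᵖ → ℝⁿ, and π ∈ ℝᵖ is a parameter. Let 𝒜 ⊆ Ξ be nonempty and compact and let V : ℝⁿ → ℝ be continuous, nonnegative, positive definite and radially unbounded with respect to 𝒜. Suppose there exists ε₀ ≥ 0 such that for all σ₀ > 0, ρ₀ > 0 and b₀ > 0 with σ₀ > ε₀ + ρ₀, there exist a nonempty set P₀ ⊆ ℝᵖ and a continuous function W : ℝⁿ → ℝ such that for every π ∈ P₀: (P1) W(ξ) > 0 for all ξ ∈ Ξ ∩ (B̄_{σ₀}(𝒜) \ B_{ε₀+ρ₀}(𝒜)); (P2) V(P_Ξ(f(ξ,π))) − V(ξ) ≤ −W(ξ) for all ξ ∈ Ξ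 ∩ (B̄_{σ₀}(𝒜) \ B_{ε₀+ρ₀}(𝒜)); and (P3) V(P_Ξ(f(ξ,π))) − V(ξ) ≤ b₀ for all ξ ∈ Ξ ∩ B̄_{ε₀+ρ₀}(𝒜). Then 𝒜 is semiglobally, practically, asymptotically stable for the system, i.e.: (practical stability) there exists ρ̌ > 0 such that for every ρ > ρ̌ there exist δ > 0 and a nonempty set P_s ⊆ ℝᵖ such that whenever π ∈ P_s, every solution with dist(ξ(0),𝒜) ≤ δ and ξ(0) ∈ Ξ satisfies dist(ξ(t),𝒜) ≤ ρ for all t ∈ ℕ; and (semiglobal practical attractivity) there exists ρ̌ₐ > 0 such that for all σ > ρₐ > ρ̌ₐ there exists a nonempty set Pₐ ⊆ ℝᵖ such that whenever π ∈ Pₐ, for every ε > 0 with {y ∈ Ξ : dist(y, B̄_{ρₐ}(𝒜)) ≤ ε} ⊆ {y ∈ Ξ : dist(y,𝒜) ≤ σ} there exists T ∈ ℕ such that every solution with ξ(0) ∈ Ξ and dist(ξ(0),𝒜) ≤ σ satisfies dist(ξ(t), B̄_{ρₐ}(𝒜)) ≤ ε for all t ≥ T. -/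
open Metric RealInnerProductSpace

/-- Sublevel sets of the distance to a nonempty compact set are compact. -/
private lemma stmt6_ball_compact {n : ℕ} (A : Set (EuclideanSpace ℝ (Fin n)))
    (hAcp : IsCompact A) (hAne : A.Nonempty) (r : ℝ) :
    IsCompact {y : EuclideanSpace ℝ (Fin n) | Metric.infDist y A ≤ r} := by
  obtain ⟨a₀, ha₀⟩ := hAne
  obtain ⟨K, hK⟩ := hAcp.isBounded.subset_closedBall a₀
  apply isCompact_of_isClosed_isBounded
  · exact isClosed_le (Metric.continuous_infDist_pt A) continuous_const
  · apply (Metric.isBounded_closedBall (x := a₀) (r := r + K)).subset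
    intro y hy
    obtain ⟨a, haA, hda⟩ := hAcp.exists_infDist_eq_dist ⟨a₀, ha₀⟩ y
    have h1 : dist y a ≤ r := by rw [← hda]; exact hy
    have h2 : dist a a₀ ≤ K := hK haA
    calc dist y a₀ ≤ dist y a + dist a a₀ := dist_triangle _ _ _
      _ ≤ r + K := add_le_add h1 h2

/-- **Lyapunov characterization of SPAS.** Consider the parameterized
discrete-time system `ξ⁺ = P_Ξ(f(ξ, π))` with `Ξ ⊆ ℝⁿ` nonempty closed convex,
`A ⊆ Ξ` nonempty compact, and `V` continuous, nonnegative, positive definite and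
radially unbounded with respect to `A`. If there exists `ε₀ ≥ 0` such that for all
`σ₀, ρ₀, b₀ > 0` with `σ₀ > ε₀ + ρ₀` there are a nonempty parameter set `P₀` and a
continuous `W` satisfying (P1) `W > 0` on `Ξ ∩ (B̄_{σ₀}(A) \ B_{ε₀+ρ₀}(A))`,
(P2) `ΔV ≤ −W` there, and (P3) `ΔV ≤ b₀` on `Ξ ∩ B̄_{ε₀+ρ₀}(A)` for every `π ∈ P₀`,
then `A` is semiglobally, practically, asymptotically stable for the system. -/
theorem stmt6 {n p : ℕ} (Xi : Set (EuclideanSpace ℝ (Fin n)))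
    (hXine : Xi.Nonempty) (hXicl : IsClosed Xi) (hXicv : Convex ℝ Xi)
    (f : EuclideanSpace ℝ (Fin n) → (Fin p → ℝ) → EuclideanSpace ℝ (Fin n))
    (A : Set (EuclideanSpace ℝ (Fin n)))
    (hAne : A.Nonempty) (hAcp : IsCompact A) (hAXi : A ⊆ Xi)
    (V : EuclideanSpace ℝ (Fin n) → ℝ) (hVc : Continuous V)
    (hVnn : ∀ y, 0 ≤ V y) (hVzero : ∀ y ∈ A, V y = 0) (hVpos : ∀ y ∉ A, 0 < V y)
    (hVru : ∀ B : ℝ, ∃ r > (0:ℝ), ∀ y, r < Metric.infDist y A → B < V y)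
    (P : EuclideanSpace ℝ (Fin n) → EuclideanSpace ℝ (Fin n))
    (hP : ∀ x, P x ∈ Xi ∧ ∀ z ∈ Xi, ‖x - P x‖ ≤ ‖x - z‖)
    (hLyap : ∃ ε₀ ≥ (0:ℝ), ∀ σ₀ > (0:ℝ), ∀ ρ₀ > (0:ℝ), ∀ b₀ > (0:ℝ),
      ε₀ + ρ₀ < σ₀ →
      ∃ P₀ : Set (Fin p → ℝ), P₀.Nonempty ∧
        ∃ W : EuclideanSpace ℝ (Fin n) → ℝ, Continuous W ∧ ∀ π ∈ P₀,
          (∀ ξ ∈ Xi, ε₀ + ρ₀ ≤ Metric.infDist ξ A → Metric.infDist ξ A ≤ σ₀ →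
            0 < W ξ) ∧
          (∀ ξ ∈ Xi, ε₀ + ρ₀ ≤ Metric.infDist ξ A → Metric.infDist ξ A ≤ σ₀ →
            V (P (f ξ π)) - V ξ ≤ -W ξ) ∧
          (∀ ξ ∈ Xi, Metric.infDist ξ A ≤ ε₀ + ρ₀ →
            V (P (f ξ π)) - V ξ ≤ b₀)) :
    -- practical stability
    (∃ ρ' > (0:ℝ), ∀ ρ > ρ', ∃ δ > (0:ℝ), ∃ Ps : Set (Fin p → ℝ), Ps.Nonempty ∧
      ∀ π ∈ Ps, ∀ ξ : ℕ → EuclideanSpace ℝ (Fin n),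
        (∀ t : ℕ, ξ (t+1) = P (f (ξ t) π)) → ξ 0 ∈ Xi →
        Metric.infDist (ξ 0) A ≤ δ → ∀ t : ℕ, Metric.infDist (ξ t) A ≤ ρ) ∧
    -- semiglobal practical attractivity
    (∃ ρa' > (0:ℝ), ∀ σ ρa : ℝ, ρa' < ρa → ρa < σ →
      ∃ Pa : Set (Fin p → ℝ), Pa.Nonempty ∧ ∀ π ∈ Pa, ∀ ε > (0:ℝ),
        ({y ∈ Xi | Metric.infDist y {z | Metric.infDist z A ≤ ρa} ≤ ε} ⊆
          {y ∈ Xi | Metric.infDist y A ≤ σ}) →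
        ∃ T : ℕ, ∀ ξ : ℕ → EuclideanSpace ℝ (Fin n),
          (∀ t : ℕ, ξ (t+1) = P (f (ξ t) π)) → ξ 0 ∈ Xi →
          Metric.infDist (ξ 0) A ≤ σ →
          ∀ t ≥ T, Metric.infDist (ξ t) {z | Metric.infDist z A ≤ ρa} ≤ ε) := by
  
  obtain ⟨ε₀, hε₀, hL⟩ := hLyap
  obtain ⟨a₀, ha₀⟩ := hAne
  -- M : max of V on the closed (ε₀+1)-neighborhood of A
  have hDcp := stmt6_ball_compact A hAcp ⟨a₀, ha₀⟩ (ε₀ + 1)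
  have hDne : {y : EuclideanSpace ℝ (Fin n) | Metric.infDist y A ≤ ε₀ + 1}.Nonempty := by
    exact ⟨a₀, by simp [Metric.infDist_zero_of_mem ha₀]; linarith⟩
  obtain ⟨yM, hyMmem, hyMmax⟩ := hDcp.exists_isMaxOn hDne hVc.continuousOn
  set M := V yM with hMdef
  have hM : ∀ y, Metric.infDist y A ≤ ε₀ + 1 → V y ≤ M := fun y hy =>
    isMaxOn_iff.mp hyMmax y hy
  obtain ⟨r_M, hrM0, hrM⟩ := hVru M
  obtain ⟨r₂, hr20, hr2⟩ := hVru (M + 1)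
  -- floor lemma: a uniform lower bound on V outside the ρ-neighborhood of A
  have floor : ∀ ρ : ℝ, r_M < ρ →
      ∃ c, M < c ∧ ∀ y, ρ ≤ Metric.infDist y A → c ≤ V y := by
    intro ρ hρ
    set S := {y : EuclideanSpace ℝ (Fin n) | ρ ≤ Metric.infDist y A} ∩
      {y | Metric.infDist y A ≤ r₂} with hSdef
    have hScp : IsCompact S :=
      (stmt6_ball_compact A hAcp ⟨a₀, ha₀⟩ r₂).of_isClosed_subset
        ((isClosed_le continuous_const (Metric.continuous_infDist_pt A)).inter
          (isClosed_le (Metric.continuous_infDist_pt A) continuous_const))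
        (fun y hy => hy.2)
    by_cases hS : S.Nonempty
    · obtain ⟨y₀, hy₀S, hy₀min⟩ := hScp.exists_isMinOn hS hVc.continuousOn
      refine ⟨min (V y₀) (M + 1), lt_min (hrM _ (lt_of_lt_of_le hρ hy₀S.1)) (by linarith), ?_⟩
      intro y hy
      by_cases h : Metric.infDist y A ≤ r₂
      · exact le_trans (min_le_left _ _) (isMinOn_iff.mp hy₀min y ⟨hy, h⟩)
      · exact le_trans (min_le_right _ _) (hr2 y (not_le.mp h)).le
    · refine ⟨M + 1, by linarith, fun y hy => ?_⟩
      have h : ¬ Metric.infDist y A ≤ r₂ := fun h => hS ⟨y, hy, h⟩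
      exact (hr2 y (not_le.mp h)).le
  -- the main construction, for each target radius ρ and initial radius σ
  have main : ∀ ρ σ : ℝ, r_M + ε₀ + 1 < ρ → 0 ≤ σ →
      ∃ P₀ : Set (Fin p → ℝ), P₀.Nonempty ∧ ∀ π ∈ P₀, ∃ T : ℕ,
        ∀ ξ : ℕ → EuclideanSpace ℝ (Fin n),
          (∀ t : ℕ, ξ (t+1) = P (f (ξ t) π)) → ξ 0 ∈ Xi →
          Metric.infDist (ξ 0) A ≤ σ →
          ((Metric.infDist (ξ 0) A ≤ ε₀ + 1 → ∀ t, Metric.infDist (ξ t) A ≤ ρ) ∧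
            (∀ t ≥ T, Metric.infDist (ξ t) A ≤ ρ)) := by
    intro ρ σ hρ hσ0
    obtain ⟨c, hcM, hc⟩ := floor ρ (by linarith)
    set b₀ := (c - M) / 2 with hb₀def
    have hb₀ : 0 < b₀ := by simp only [hb₀def]; linarith
    have hMb₀c : M + b₀ < c := by simp only [hb₀def]; linarith
    -- Mσ : max of V on the σ-neighborhood of A
    obtain ⟨yσ, hyσmem, hyσmax⟩ := (stmt6_ball_compact A hAcp ⟨a₀, ha₀⟩ σ).exists_isMaxOn
      ⟨a₀, by simpa [Metric.infDist_zero_of_mem ha₀] using hσ0⟩ hVc.continuousOn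
    set Mσ := V yσ with hMσdef
    have hMσ : ∀ y, Metric.infDist y A ≤ σ → V y ≤ Mσ := fun y hy =>
      isMaxOn_iff.mp hyσmax y hy
    set c₂ := max Mσ (M + b₀) with hc₂def
    obtain ⟨r₄, hr40, hr4⟩ := hVru c₂
    set σ₀ := max ρ r₄ + 1 with hσ₀def
    have hσ₀pos : 0 < σ₀ := by
      have : ρ ≤ max ρ r₄ := le_max_left _ _
      simp only [hσ₀def]; linarith
    have hσ₀gt : ε₀ + 1 < σ₀ := by
      have : ρ ≤ max ρ r₄ := le_max_left _ _
      simp only [hσ₀def]; linarith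
    have hr₄σ₀ : r₄ ≤ σ₀ := by
      have : r₄ ≤ max ρ r₄ := le_max_right _ _
      simp only [hσ₀def]; linarith
    obtain ⟨P₀, hP₀ne, W, hWc, hWprop⟩ := hL σ₀ hσ₀pos 1 one_pos b₀ hb₀ hσ₀gt
    refine ⟨P₀, hP₀ne, fun π hπ => ?_⟩
    obtain ⟨hP1, hP2, hP3⟩ := hWprop π hπ
    -- uniform decrease rate w on the compact annulus
    set Kc := (Xi ∩ {y | ε₀ + 1 ≤ Metric.infDist y A}) ∩
      {y | Metric.infDist y A ≤ r₄} with hKcdef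
    have hKccp : IsCompact Kc :=
      (stmt6_ball_compact A hAcp ⟨a₀, ha₀⟩ r₄).of_isClosed_subset
        ((hXicl.inter (isClosed_le continuous_const (Metric.continuous_infDist_pt A))).inter
          (isClosed_le (Metric.continuous_infDist_pt A) continuous_const))
        (fun y hy => hy.2)
    have hw : ∃ w > (0:ℝ), ∀ y ∈ Kc, w ≤ W y := by
      by_cases hK : Kc.Nonempty
      · obtain ⟨y₀, hy₀, hmin⟩ := hKccp.exists_isMinOn hK hWc.continuousOn
        exact ⟨W y₀, hP1 y₀ hy₀.1.1 hy₀.1.2 (le_trans hy₀.2 hr₄σ₀),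
          fun y hy => isMinOn_iff.mp hmin y hy⟩
      · exact ⟨1, one_pos, fun y hy => absurd ⟨y, hy⟩ hK⟩
    obtain ⟨w, hw0, hwK⟩ := hw
    refine ⟨Nat.ceil (c₂ / w) + 1, ?_⟩
    set T := Nat.ceil (c₂ / w) + 1 with hTdef
    have hTw : c₂ < (T : ℝ) * w := by
      have h1 : c₂ / w ≤ (Nat.ceil (c₂ / w) : ℝ) := Nat.le_ceil _
      have h2 : (c₂ / w) * w = c₂ := div_mul_cancel₀ _ (ne_of_gt hw0)
      have h3 : (c₂ / w) * w ≤ (Nat.ceil (c₂ / w) : ℝ) * w :=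
        mul_le_mul_of_nonneg_right h1 hw0.le
      have : (T : ℝ) = (Nat.ceil (c₂ / w) : ℝ) + 1 := by simp [hTdef]
      rw [this]; nlinarith
    intro ξ hξrec hξ0Xi hξ0σ
    have hXiall : ∀ t, ξ t ∈ Xi := by
      intro t
      cases t with
      | zero => exact hξ0Xi
      | succ t => rw [hξrec]; exact (hP _).1
    -- from a bound V ≤ c₂ we get distance bounds
    have hdistb : ∀ t, V (ξ t) ≤ c₂ → Metric.infDist (ξ t) A ≤ r₄ := by
      intro t ht
      by_contra h
      exact absurd ht (not_le.mpr (hr4 _ (not_le.mp h)))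
    -- the key induction
    have hmain : ∀ t, V (ξ t) ≤ c₂ ∧
        (V (ξ t) ≤ M + b₀ ∨ V (ξ t) ≤ c₂ - t * w) := by
      intro t
      induction t with
      | zero =>
        have h0 : V (ξ 0) ≤ Mσ := hMσ _ hξ0σ
        have h0' : V (ξ 0) ≤ c₂ := le_trans h0 (le_max_left _ _)
        exact ⟨h0', Or.inr (by simpa using h0')⟩
      | succ t ih =>
        obtain ⟨ihc, ihd⟩ := ih
        have hd4 := hdistb t ihc
        have hdσ₀ : Metric.infDist (ξ t) A ≤ σ₀ := le_trans hd4 hr₄σ₀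
        by_cases hd : Metric.infDist (ξ t) A ≤ ε₀ + 1
        · have hVM : V (ξ t) ≤ M := hM _ hd
          have h3 := hP3 (ξ t) (hXiall t) hd
          have hnext : V (ξ (t+1)) ≤ M + b₀ := by rw [hξrec]; linarith
          exact ⟨le_trans hnext (le_max_right _ _), Or.inl hnext⟩
        · have hd' : ε₀ + 1 ≤ Metric.infDist (ξ t) A := (not_le.mp hd).le
          have h2 := hP2 (ξ t) (hXiall t) hd' hdσ₀
          have h1 := hP1 (ξ t) (hXiall t) hd' hdσ₀
          refine ⟨by rw [hξrec]; linarith, ?_⟩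
          rcases ihd with h | h
          · exact Or.inl (by rw [hξrec]; linarith)
          · refine Or.inr ?_
            have hKmem : ξ t ∈ Kc := ⟨⟨hXiall t, hd'⟩, hd4⟩
            have hwξ := hwK _ hKmem
            rw [hξrec]; push_cast; linarith
    -- from V ≤ M + b₀ we get distance ≤ ρ
    have hsmall : ∀ t, V (ξ t) ≤ M + b₀ → Metric.infDist (ξ t) A ≤ ρ := by
      intro t ht
      by_contra h
      have := hc _ (not_le.mp h).le
      linarith
    constructor
    · -- practical stability part
      intro h0
      have hinv : ∀ t, V (ξ t) ≤ M + b₀ := by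
        intro t
        induction t with
        | zero => exact le_trans (hM _ h0) (by linarith)
        | succ t ih =>
          have hd4 := hdistb t (le_trans ih (le_max_right _ _))
          have hdσ₀ : Metric.infDist (ξ t) A ≤ σ₀ := le_trans hd4 hr₄σ₀
          by_cases hd : Metric.infDist (ξ t) A ≤ ε₀ + 1
          · have hVM : V (ξ t) ≤ M := hM _ hd
            have h3 := hP3 (ξ t) (hXiall t) hd
            rw [hξrec]; linarith
          · have hd' : ε₀ + 1 ≤ Metric.infDist (ξ t) A := (not_le.mp hd).le
            have h2 := hP2 (ξ t) (hXiall t) hd' hdσ₀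
            have h1 := hP1 (ξ t) (hXiall t) hd' hdσ₀
            rw [hξrec]; linarith
      exact fun t => hsmall t (hinv t)
    · -- attractivity part
      intro t ht
      rcases (hmain t).2 with h | h
      · exact hsmall t h
      · exfalso
        have hTt : (T : ℝ) * w ≤ (t : ℝ) * w :=
          mul_le_mul_of_nonneg_right (by exact_mod_cast ht) hw0.le
        have := hVnn (ξ t)
        linarith
  -- assemble the two conclusions
  constructor
  · refine ⟨r_M + ε₀ + 1, by linarith, fun ρ hρ => ?_⟩
    obtain ⟨P₀, hne, hprop⟩ := main ρ (ε₀ + 1) hρ (by linarith)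
    refine ⟨ε₀ + 1, by linarith, P₀, hne, fun π hπ ξ hrec h0Xi h0d => ?_⟩
    obtain ⟨T, hT⟩ := hprop π hπ
    exact (hT ξ hrec h0Xi h0d).1 h0d
  · refine ⟨r_M + ε₀ + 1, by linarith, fun σ ρa hρa hσ => ?_⟩
    obtain ⟨P₀, hne, hprop⟩ := main ρa σ hρa (by linarith)
    refine ⟨P₀, hne, fun π hπ ε hε hincl => ?_⟩
    obtain ⟨T, hT⟩ := hprop π hπ
    refine ⟨T, fun ξ hrec h0Xi h0σ t ht => ?_⟩
    have hd : ξ t ∈ {z : EuclideanSpace ℝ (Fin n) | Metric.infDist z A ≤ ρa} :=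
      (hT ξ hrec h0Xi h0σ).2 t ht
    rw [Metric.infDist_zero_of_mem hd]
    exact hε.le
end

section
/- Let J : ℝⁿ → ℝ be convex with nonempty compact set X* of global minimizers and minimum value J*. Then for any σ̂ > ε̂ > 0 there exists c > 0 such that J(y) − J* ≥ (c/σ̂²)·dist(y, X*)² for all y with ε̂ ≤ dist(y, X*) ≤ σ̂. -/
open Metric

/-! A convex function on `ℝⁿ` is continuous, so on the compact annulus `ε̂ ≤ dist(y, X*) ≤ σ̂`
it attains its minimum, which exceeds `J*` because the annulus misses `X*`. Since
`dist(y, X*)² ≤ σ̂²` there, that minimum gap `c` works. -/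

theorem isCompact_setOf_le_infDist_le {α : Type*} [PseudoMetricSpace α] [ProperSpace α]
    {s : Set α} (hs : IsCompact s) {ε : ℝ} (hε : 0 < ε) (σ : ℝ) :
    IsCompact {y | ε ≤ infDist y s ∧ infDist y s ≤ σ} := by
  have hclosed : IsClosed {y | ε ≤ infDist y s ∧ infDist y s ≤ σ} :=
    (isClosed_le continuous_const (continuous_infDist_pt s)).inter
      (isClosed_le (continuous_infDist_pt s) continuous_const)
  refine (hs.cthickening (r := σ)).of_isClosed_subset hclosed fun y ⟨hεy, hyσ⟩ ↦ ?_
  have hne : s.Nonempty := Set.nonempty_iff_ne_empty.2 fun h ↦ by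
    rw [h, infDist_empty] at hεy
    linarith
  obtain ⟨z, hz, hyz⟩ := hs.exists_infDist_eq_dist hne y
  exact mem_cthickening_of_dist_le y z σ s hz (hyz ▸ hyσ)

theorem stmt18_general {n : ℕ} (J : EuclideanSpace ℝ (Fin n) → ℝ)
    (hJ : ConvexOn ℝ Set.univ J)
    (Xstar : Set (EuclideanSpace ℝ (Fin n)))
    (hcp : IsCompact Xstar) (Jstar : ℝ)
    (hlb : ∀ z, Jstar ≤ J z)
    (hexact : ∀ z, J z = Jstar → z ∈ Xstar)
    (σhat εhat : ℝ) (hεhat : 0 < εhat) (hσε : εhat < σhat) :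
    ∃ c > (0:ℝ), ∀ y, εhat ≤ Metric.infDist y Xstar →
      Metric.infDist y Xstar ≤ σhat →
      (c / σhat^2) * (Metric.infDist y Xstar)^2 ≤ J y - Jstar := by
  have hcont : Continuous J := continuousOn_univ.1 (hJ.continuousOn isOpen_univ)
  have hgap : ∀ y ∈ {y | εhat ≤ infDist y Xstar ∧ infDist y Xstar ≤ σhat}, Jstar < J y :=
    fun y ⟨hεy, _⟩ ↦ (hlb y).lt_of_ne fun h ↦ by
      rw [infDist_zero_of_mem (hexact y h.symm)] at hεy
      linarith
  obtain ⟨m, hm, hmJ⟩ := (isCompact_setOf_le_infDist_le hcp hεhat σhat).exists_forall_le'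
    hcont.continuousOn hgap
  refine ⟨m - Jstar, sub_pos.2 hm, fun y hεy hyσ ↦ ?_⟩
  have hσ : 0 < σhat := hεhat.trans hσε
  calc (m - Jstar) / σhat ^ 2 * infDist y Xstar ^ 2
      ≤ (m - Jstar) / σhat ^ 2 * σhat ^ 2 := by
        gcongr
        exact infDist_nonneg
    _ = m - Jstar := div_mul_cancel₀ _ (by positivity)
    _ ≤ J y - Jstar := sub_le_sub_right (hmJ y ⟨hεy, hyσ⟩) _

/-- Let `J : ℝⁿ → ℝ` be convex with nonempty compact set `X*` of
global minimizers and minimum value `J*`. Then for any `σ̂ > ε̂ > 0` there exists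
`c > 0` such that `J(y) − J* ≥ (c/σ̂²)·dist(y, X*)²` for all `y` with
`ε̂ ≤ dist(y, X*) ≤ σ̂`. -/
theorem stmt18 {n : ℕ} (J : EuclideanSpace ℝ (Fin n) → ℝ)
    (hJ : ConvexOn ℝ Set.univ J)
    (Xstar : Set (EuclideanSpace ℝ (Fin n)))
    (hne : Xstar.Nonempty) (hcp : IsCompact Xstar) (Jstar : ℝ)
    (hmin : ∀ x ∈ Xstar, J x = Jstar) (hlb : ∀ z, Jstar ≤ J z)
    (hexact : ∀ z, J z = Jstar → z ∈ Xstar)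
    (σhat εhat : ℝ) (hεhat : 0 < εhat) (hσε : εhat < σhat) :
    ∃ c > (0:ℝ), ∀ y, εhat ≤ Metric.infDist y Xstar →
      Metric.infDist y Xstar ≤ σhat →
      (c / σhat^2) * (Metric.infDist y Xstar)^2 ≤ J y - Jstar :=
  stmt18_general J hJ Xstar hcp Jstar hlb hexact σhat εhat hεhat hσε
end
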